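/- arXiv:2307.12340 — 7 statements merged into one kernel-verified Lean document; each statement's English description precedes it below -/
import Mathlib

section
/- Assume g ∈ C²([0,∞)) satisfies (A1) g(t)>0 and g'(t)>0, (A2) 1/g ∈ L¹(0,∞), and (A3) |d_t^k g(t)| ≤ C_k g(t)(g(t)/G(t))^k for k=1,2, with G(t)=½∫₀ᵗ g(τ)dτ. Fix N > 0 and consider the 2×2 complex matrix A(t,ξ) with entries A₁₁ = −i g'(t)/g(t), A₁₂ = g(t)|ξ|²/2, A₂₁ = 2/g(t), A₂₂ = i g(t)|ξ|², and let E_pd(·,s,ξ) be the fundamental solution, i.e. ∂_t E_pd(t,s,ξ) = i A(t,ξ) E_pd(t,s,ξ), E_pd(s,s,ξ) = I. Then there exists C > 0 (depending on N) such that for all ξ and all 0 ≤ s ≤ t with G(t)|ξ|² ≤ N, every entry satisfies |E_pd^{(kℓ)}(t,s,ξ)| ≤ C g(t)/g(s). -/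
/-!
For a column (X, Y) of E_pd put n = |X|² + |Y|². The weighted energy n / g² satisfies
(n / g²)' ≤ (g|ξ|²/2 + 2/g) · n / g²: the weight absorbs the diagonal entry -i g'/g of A,
the entry i g|ξ|² is dissipative, and the off-diagonal entries contribute at most their size.
Gronwall's inequality gives n(t) ≤ (g(t)/g(s))² exp ∫ₛᵗ (g|ξ|²/2 + 2/g), and in the zone
G(t)|ξ|² ≤ N the exponent is at most N + 2‖1/g‖_{L¹(0,∞)}.
-/

open Set MeasureTheory
open Complex

theorem le_mul_exp_integral_of_hasDerivAt_le_mul {f f' φ : ℝ → ℝ} {s t : ℝ} (hst : s ≤ t)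
    (hf : ContinuousOn f (Icc s t)) (hφ : ContinuousOn φ (Icc s t))
    (hf' : ∀ x ∈ Ioo s t, HasDerivAt f (f' x) x) (bound : ∀ x ∈ Ioo s t, f' x ≤ φ x * f x) :
    f t ≤ f s * Real.exp (∫ x in s..t, φ x) := by
  set Φ : ℝ → ℝ := fun x => ∫ y in s..x, φ y
  have hΦ : ContinuousOn Φ (Icc s t) := by
    have := intervalIntegral.continuousOn_primitive_interval (μ := volume)
      (by rw [uIcc_of_le hst]; exact hφ.integrableOn_Icc)
    rwa [uIcc_of_le hst] at this
  have hΦ' : ∀ x ∈ Ioo s t, HasDerivAt Φ (φ x) x := fun x hx =>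
    intervalIntegral.integral_hasDerivAt_right
      ((hφ.mono (Icc_subset_Icc le_rfl hx.2.le)).intervalIntegrable_of_Icc hx.1.le)
      (hφ.mono Ioo_subset_Icc_self |>.stronglyMeasurableAtFilter isOpen_Ioo x hx)
      (hφ.continuousAt (Icc_mem_nhds hx.1 hx.2))
  have hanti : AntitoneOn (fun x => f x * Real.exp (-Φ x)) (Icc s t) := by
    refine antitoneOn_of_hasDerivWithinAt_nonpos (convex_Icc s t)
      (f' := fun x => (f' x - φ x * f x) * Real.exp (-Φ x))
      (hf.mul (hΦ.neg.rexp)) (fun x hx => ?_) (fun x hx => ?_)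
    all_goals rw [interior_Icc] at hx
    · exact ((hf' x hx).mul (hΦ' x hx).neg.exp).hasDerivWithinAt.congr_deriv
        (by simp only [Pi.neg_apply]; ring)
    · exact mul_nonpos_of_nonpos_of_nonneg (sub_nonpos.2 (bound x hx)) (Real.exp_pos _).le
  have key := hanti ⟨le_rfl, hst⟩ ⟨hst, le_rfl⟩ hst
  simp only [Φ, intervalIntegral.integral_same, neg_zero, Real.exp_zero, mul_one] at key
  calc f t = f t * Real.exp (-Φ t) * Real.exp (Φ t) := by
        rw [mul_assoc, ← Real.exp_add, neg_add_cancel, Real.exp_zero, mul_one]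
    _ ≤ f s * Real.exp (Φ t) := by gcongr

theorem two_mul_inner_pd_system_sub_le (p q : ℂ) {a b c d : ℝ} (had : 0 ≤ a + d) (hb : 0 ≤ b)
    (hc : 0 ≤ c) :
    2 * (inner ℝ p (I * (-I * (a : ℂ) * p + (b : ℂ) * q))
        + inner ℝ q (I * ((c : ℂ) * p + I * (d : ℂ) * q)))
      - 2 * a * (‖p‖ ^ 2 + ‖q‖ ^ 2) ≤ (b + c) * (‖p‖ ^ 2 + ‖q‖ ^ 2) := by
  simp only [Complex.inner, ← normSq_eq_norm_sq, normSq_apply, mul_re, mul_im, add_re, add_im,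
    neg_re, neg_im, I_re, I_im, ofReal_re, ofReal_im, conj_re, conj_im]
  nlinarith [mul_nonneg had (mul_self_nonneg q.re), mul_nonneg had (mul_self_nonneg q.im),
    mul_nonneg hb (add_nonneg (sq_nonneg (p.re + q.im)) (sq_nonneg (p.im - q.re))),
    mul_nonneg hc (add_nonneg (sq_nonneg (p.re - q.im)) (sq_nonneg (p.im + q.re)))]

theorem pd_energy_le {g g' : ℝ → ℝ} {k s t : ℝ} {X Y : ℝ → ℂ} (hk : 0 ≤ k) (hs : 0 ≤ s)
    (hst : s ≤ t) (hg : ∀ τ ∈ Ici (0:ℝ), HasDerivWithinAt g (g' τ) (Ici 0) τ)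
    (hg_pos : ∀ τ ∈ Ici (0:ℝ), 0 < g τ) (hg'_nonneg : ∀ τ ∈ Ici (0:ℝ), 0 ≤ g' τ)
    (hX : ∀ τ ∈ Ici s,
      HasDerivAt X (I * (-I * ((g' τ / g τ : ℝ) : ℂ) * X τ + ((g τ * k / 2 : ℝ) : ℂ) * Y τ)) τ)
    (hY : ∀ τ ∈ Ici s,
      HasDerivAt Y (I * (((2 / g τ : ℝ) : ℂ) * X τ + I * ((g τ * k : ℝ) : ℂ) * Y τ)) τ) :
    ‖X t‖ ^ 2 + ‖Y t‖ ^ 2 ≤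
      (‖X s‖ ^ 2 + ‖Y s‖ ^ 2) * (g t / g s) ^ 2 *
        Real.exp (∫ τ in s..t, g τ * k / 2 + 2 / g τ) := by
  have hIcc : Icc s t ⊆ Ici 0 := fun τ hτ => hs.trans hτ.1
  have hgpos : ∀ τ ∈ Icc s t, g τ ≠ 0 := fun τ hτ => (hg_pos τ (hIcc hτ)).ne'
  have hgc : ContinuousOn g (Icc s t) :=
    fun τ hτ => ((hg τ (hIcc hτ)).continuousWithinAt).mono hIcc
  set E : ℝ → ℝ := fun τ => ‖X τ‖ ^ 2 + ‖Y τ‖ ^ 2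
  have hEc : ContinuousOn E (Icc s t) := fun τ hτ =>
    (((hX τ hτ.1).continuousAt.norm.pow 2).add
      ((hY τ hτ.1).continuousAt.norm.pow 2)).continuousWithinAt
  set E' : ℝ → ℝ := fun τ => 2 * (inner ℝ (X τ) (I * (-I * ((g' τ / g τ : ℝ) : ℂ) * X τ
    + ((g τ * k / 2 : ℝ) : ℂ) * Y τ)) + inner ℝ (Y τ) (I * (((2 / g τ : ℝ) : ℂ) * X τ
    + I * ((g τ * k : ℝ) : ℂ) * Y τ)))
  have hgronwall := le_mul_exp_integral_of_hasDerivAt_le_mul (f := fun τ => E τ / g τ ^ 2)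
    (f' := fun τ => (E' τ - 2 * (g' τ / g τ) * E τ) / g τ ^ 2)
    (φ := fun τ => g τ * k / 2 + 2 / g τ) hst
    (hEc.div (hgc.pow 2) fun τ hτ => pow_ne_zero 2 (hgpos τ hτ))
    (((hgc.mul continuousOn_const).div_const 2).add (continuousOn_const.div hgc hgpos))
    (fun x hx => ?deriv) (fun x hx => ?bound)
  case deriv =>
    have hx0 : 0 < x := hs.trans_lt hx.1
    have hgx := hg_pos x hx0.le
    have hE : HasDerivAt E (E' x) x :=
      ((hX x hx.1.le).norm_sq.add (hY x hx.1.le).norm_sq).congr_deriv (by simp only [E']; ring)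
    refine ((hE.div (((hg x hx0.le).hasDerivAt (Ici_mem_nhds hx0)).pow 2)
      (pow_ne_zero 2 hgx.ne')).congr_deriv ?_)
    simp only [Pi.pow_apply]
    field_simp
    ring
  case bound =>
    have hgx := hg_pos x (hs.trans hx.1.le)
    have hg'x := hg'_nonneg x (hs.trans hx.1.le)
    rw [← mul_div_assoc (g x * k / 2 + 2 / g x), div_le_div_iff_of_pos_right (by positivity)]
    have := two_mul_inner_pd_system_sub_le (X x) (Y x) (a := g' x / g x) (b := g x * k / 2)
      (c := 2 / g x) (d := g x * k) (by positivity) (by positivity) (by positivity)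
    linarith
  have hgs := hg_pos s hs
  have hgt := hg_pos t (hs.trans hst)
  calc E t = E t / g t ^ 2 * g t ^ 2 := by field_simp
    _ ≤ E s / g s ^ 2 * Real.exp (∫ τ in s..t, g τ * k / 2 + 2 / g τ) * g t ^ 2 := by gcongr
    _ = E s * (g t / g s) ^ 2 * Real.exp (∫ τ in s..t, g τ * k / 2 + 2 / g τ) := by
      rw [div_pow]; ring

theorem integral_pd_rate_le {g : ℝ → ℝ} {k s t N : ℝ} (hk : 0 ≤ k) (hs : 0 ≤ s) (hst : s ≤ t)
    (hgc : ContinuousOn g (Ici 0)) (hgpos : ∀ τ ∈ Ici (0:ℝ), 0 < g τ)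
    (hinv : IntegrableOn (fun τ => 1 / g τ) (Ici 0))
    (hzone : ((1/2) * ∫ τ in (0:ℝ)..t, g τ) * k ≤ N) :
    ∫ τ in s..t, g τ * k / 2 + 2 / g τ ≤ N + 2 * ∫ τ in Ici (0:ℝ), 1 / g τ := by
  have hIcc : ∀ {a}, 0 ≤ a → Icc a t ⊆ Ici 0 := fun ha τ hτ => ha.trans hτ.1
  have hg_int : IntervalIntegrable g volume s t :=
    (hgc.mono (hIcc hs)).intervalIntegrable_of_Icc hst
  have hinv_int : IntervalIntegrable (fun τ => 1 / g τ) volume s t :=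
    (intervalIntegrable_iff_integrableOn_Icc_of_le hst).2 (hinv.mono_set (hIcc hs))
  have hg_le : ∫ τ in s..t, g τ ≤ ∫ τ in (0:ℝ)..t, g τ :=
    intervalIntegral.integral_mono_interval hs hst le_rfl
      ((ae_restrict_mem measurableSet_Ioc).mono fun τ hτ => (hgpos τ hτ.1.le).le)
      ((hgc.mono (hIcc le_rfl)).intervalIntegrable_of_Icc (hs.trans hst))
  have hinv_le : ∫ τ in s..t, 1 / g τ ≤ ∫ τ in Ici (0:ℝ), 1 / g τ := by
    rw [intervalIntegral.integral_of_le hst]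
    exact setIntegral_mono_set hinv
      ((ae_restrict_mem measurableSet_Ici).mono fun τ hτ => (one_div_pos.2 (hgpos τ hτ)).le)
      (Filter.Eventually.of_forall fun τ hτ => hs.trans hτ.1.le)
  calc ∫ τ in s..t, g τ * k / 2 + 2 / g τ
      = ∫ τ in s..t, g τ * (k / 2) + 2 * (1 / g τ) :=
        intervalIntegral.integral_congr fun τ _ => by ring
    _ = (∫ τ in s..t, g τ) * (k / 2) + 2 * ∫ τ in s..t, 1 / g τ := by
        rw [intervalIntegral.integral_add (hg_int.mul_const _) (hinv_int.const_mul _),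
          intervalIntegral.integral_mul_const, intervalIntegral.integral_const_mul]
    _ ≤ (∫ τ in (0:ℝ)..t, g τ) * (k / 2) + 2 * ∫ τ in Ici (0:ℝ), 1 / g τ := by gcongr
    _ ≤ N + 2 * ∫ τ in Ici (0:ℝ), 1 / g τ := by linarith

theorem pd_column_norm_le {g g' : ℝ → ℝ} {k s t N : ℝ} {X Y : ℝ → ℂ} (hk : 0 ≤ k) (hs : 0 ≤ s)
    (hst : s ≤ t) (hg : ∀ τ ∈ Ici (0:ℝ), HasDerivWithinAt g (g' τ) (Ici 0) τ)
    (hg_pos : ∀ τ ∈ Ici (0:ℝ), 0 < g τ) (hg'_nonneg : ∀ τ ∈ Ici (0:ℝ), 0 ≤ g' τ)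
    (hinv : IntegrableOn (fun τ => 1 / g τ) (Ici 0))
    (hzone : ((1/2) * ∫ τ in (0:ℝ)..t, g τ) * k ≤ N)
    (hinit : ‖X s‖ ^ 2 + ‖Y s‖ ^ 2 = 1)
    (hX : ∀ τ ∈ Ici s,
      HasDerivAt X (I * (-I * ((g' τ / g τ : ℝ) : ℂ) * X τ + ((g τ * k / 2 : ℝ) : ℂ) * Y τ)) τ)
    (hY : ∀ τ ∈ Ici s,
      HasDerivAt Y (I * (((2 / g τ : ℝ) : ℂ) * X τ + I * ((g τ * k : ℝ) : ℂ) * Y τ)) τ) :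
    ‖X t‖ ≤ Real.exp ((N + 2 * ∫ τ in Ici (0:ℝ), 1 / g τ) / 2) * (g t / g s) ∧
      ‖Y t‖ ≤ Real.exp ((N + 2 * ∫ τ in Ici (0:ℝ), 1 / g τ) / 2) * (g t / g s) := by
  set L := N + 2 * ∫ τ in Ici (0:ℝ), 1 / g τ
  have hrate := integral_pd_rate_le hk hs hst (fun τ hτ => (hg τ hτ).continuousWithinAt)
    hg_pos hinv hzone
  have hgts : 0 < g t / g s := div_pos (hg_pos t (hs.trans hst)) (hg_pos s hs)
  have henergy : ‖X t‖ ^ 2 + ‖Y t‖ ^ 2 ≤ (Real.exp (L / 2) * (g t / g s)) ^ 2 :=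
    calc ‖X t‖ ^ 2 + ‖Y t‖ ^ 2
        ≤ 1 * (g t / g s) ^ 2 * Real.exp (∫ τ in s..t, g τ * k / 2 + 2 / g τ) :=
          hinit ▸ pd_energy_le hk hs hst hg hg_pos hg'_nonneg hX hY
      _ ≤ 1 * (g t / g s) ^ 2 * Real.exp L := by gcongr
      _ = (Real.exp (L / 2) * (g t / g s)) ^ 2 := by
          rw [mul_pow, ← Real.exp_nat_mul]; push_cast; ring_nf
  constructor <;> refine le_of_pow_le_pow_left₀ two_ne_zero (by positivity) ?_ <;>
    nlinarith [sq_nonneg ‖X t‖, sq_nonneg ‖Y t‖]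

theorem stmt_4_general
    (n : ℕ)
    (g g' : ℝ → ℝ)
    (hg_deriv : ∀ t ∈ Ici (0:ℝ), HasDerivWithinAt g (g' t) (Ici 0) t)
    (hA1 : ∀ t ∈ Ici (0:ℝ), 0 < g t ∧ 0 < g' t)
    (hA2 : IntegrableOn (fun t => 1 / g t) (Ici 0))
    (N : ℝ) :
    ∃ C > (0:ℝ),
      ∀ (ξ : EuclideanSpace ℝ (Fin n)),
      ∀ s t : ℝ, 0 ≤ s → s ≤ t →
        ((1/2) * ∫ τ in (0:ℝ)..t, g τ) * ‖ξ‖ ^ 2 ≤ N →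
      ∀ E11 E12 E21 E22 : ℝ → ℂ,
        E11 s = 1 → E12 s = 0 → E21 s = 0 → E22 s = 1 →
        (∀ τ ∈ Ici s,
          HasDerivAt E11 (Complex.I * ((-Complex.I * ((g' τ / g τ : ℝ) : ℂ)) * E11 τ + ((g τ * ‖ξ‖ ^ 2 / 2 : ℝ) : ℂ) * E21 τ)) τ ∧
          HasDerivAt E21 (Complex.I * (((2 / g τ : ℝ) : ℂ) * E11 τ + (Complex.I * ((g τ * ‖ξ‖ ^ 2 : ℝ) : ℂ)) * E21 τ)) τ ∧
          HasDerivAt E12 (Complex.I * ((-Complex.I * ((g' τ / g τ : ℝ) : ℂ)) * E12 τ + ((g τ * ‖ξ‖ ^ 2 / 2 : ℝ) : ℂ) * E22 τ)) τ ∧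
          HasDerivAt E22 (Complex.I * (((2 / g τ : ℝ) : ℂ) * E12 τ + (Complex.I * ((g τ * ‖ξ‖ ^ 2 : ℝ) : ℂ)) * E22 τ)) τ) →
        ‖E11 t‖ ≤ C * (g t / g s) ∧ ‖E12 t‖ ≤ C * (g t / g s) ∧
        ‖E21 t‖ ≤ C * (g t / g s) ∧ ‖E22 t‖ ≤ C * (g t / g s) := by
  refine ⟨_, Real.exp_pos ((N + 2 * ∫ τ in Ici (0:ℝ), 1 / g τ) / 2), ?_⟩
  intro ξ s t hs hst hzone E11 E12 E21 E22 h11 h12 h21 h22 hODE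
  have hcolumn := fun {X Y : ℝ → ℂ} => pd_column_norm_le (X := X) (Y := Y)
    (by positivity) hs hst hg_deriv (fun τ hτ => (hA1 τ hτ).1) (fun τ hτ => (hA1 τ hτ).2.le) hA2
    hzone
  obtain ⟨h11t, h21t⟩ := hcolumn (by simp [h11, h21]) (fun τ hτ => (hODE τ hτ).1)
    (fun τ hτ => (hODE τ hτ).2.1)
  obtain ⟨h12t, h22t⟩ := hcolumn (by simp [h12, h22]) (fun τ hτ => (hODE τ hτ).2.2.1)
    (fun τ hτ => (hODE τ hτ).2.2.2)
  exact ⟨h11t, h12t, h21t, h22t⟩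

theorem stmt_4
    (n : ℕ)
    (g g' g'' : ℝ → ℝ)
    (hg_deriv : ∀ t ∈ Ici (0:ℝ), HasDerivWithinAt g (g' t) (Ici 0) t)
    (hg_deriv' : ∀ t ∈ Ici (0:ℝ), HasDerivWithinAt g' (g'' t) (Ici 0) t)
    (hg_cont : ContinuousOn g'' (Ici 0))
    (hA1 : ∀ t ∈ Ici (0:ℝ), 0 < g t ∧ 0 < g' t)
    (hA2 : IntegrableOn (fun t => 1 / g t) (Ici 0))
    (hA3 : ∃ C₁ > (0:ℝ), ∃ C₂ > (0:ℝ), ∀ t ∈ Ici (0:ℝ),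
      |g' t| * ((1/2) * ∫ τ in (0:ℝ)..t, g τ) ≤ C₁ * g t * g t ∧
      |g'' t| * ((1/2) * ∫ τ in (0:ℝ)..t, g τ) ^ 2 ≤ C₂ * g t * g t ^ 2)
    (N : ℝ) (hN : 0 < N) :
    ∃ C > (0:ℝ),
      ∀ (ξ : EuclideanSpace ℝ (Fin n)),
      ∀ s t : ℝ, 0 ≤ s → s ≤ t →
        ((1/2) * ∫ τ in (0:ℝ)..t, g τ) * ‖ξ‖ ^ 2 ≤ N →
      ∀ E11 E12 E21 E22 : ℝ → ℂ,
        E11 s = 1 → E12 s = 0 → E21 s = 0 → E22 s = 1 →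
        (∀ τ ∈ Ici s,
          HasDerivAt E11 (Complex.I * ((-Complex.I * ((g' τ / g τ : ℝ) : ℂ)) * E11 τ + ((g τ * ‖ξ‖ ^ 2 / 2 : ℝ) : ℂ) * E21 τ)) τ ∧
          HasDerivAt E21 (Complex.I * (((2 / g τ : ℝ) : ℂ) * E11 τ + (Complex.I * ((g τ * ‖ξ‖ ^ 2 : ℝ) : ℂ)) * E21 τ)) τ ∧
          HasDerivAt E12 (Complex.I * ((-Complex.I * ((g' τ / g τ : ℝ) : ℂ)) * E12 τ + ((g τ * ‖ξ‖ ^ 2 / 2 : ℝ) : ℂ) * E22 τ)) τ ∧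
          HasDerivAt E22 (Complex.I * (((2 / g τ : ℝ) : ℂ) * E12 τ + (Complex.I * ((g τ * ‖ξ‖ ^ 2 : ℝ) : ℂ)) * E22 τ)) τ) →
        ‖E11 t‖ ≤ C * (g t / g s) ∧ ‖E12 t‖ ≤ C * (g t / g s) ∧
        ‖E21 t‖ ≤ C * (g t / g s) ∧ ‖E22 t‖ ≤ C * (g t / g s) :=
  stmt_4_general n g g' hg_deriv hA1 hA2 N
end

section
/- Assume g ∈ C²([0,∞)) satisfies (A1) g(t)>0 and g'(t)>0, (A2) 1/g ∈ L¹(0,∞), and (A3) |d_t^k g(t)| ≤ C_k g(t)(g(t)/G(t))^k for k=1,2, with G(t)=½∫₀ᵗ g(τ)dτ. Fix N > 0. Then there exists C > 0 such that for every ξ, every C² solution û(·,ξ) of the Fourier-transformed equation with data û(0,ξ)=û₀(ξ), û_t(0,ξ)=û₁(ξ), and every t ≥ 0 with G(t)|ξ|² ≤ N: for any real s ≥ 2, |ξ|^{s}|û(t,ξ)| ≤ C ( |ξ|^{s}|û₀(ξ)| + |ξ|^{s−2}|û₁(ξ)| ), and for any real r ≥ 0, |ξ|^{r}|û_t(t,ξ)|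 ≤ C g(t) ( |ξ|^{r+2}|û₀(ξ)| + |ξ|^{r}|û₁(ξ)| ). -/
/-!
With `a = ‖ξ‖²`, the weighted energy `a ‖û‖ + ‖û_t‖ / g` satisfies `E' ≤ E / g`: the coupling
term `a ⟪û_t, û⟫` is absorbed by the damping `-g a ‖û_t‖²`, and `g' ≥ 0` makes the weight `1 / g`
nonincreasing. Since `1 / g ∈ L¹(0, ∞)`, Gronwall's inequality bounds the energy by
`exp (∫₀^∞ 1 / g)` times its initial value, uniformly in `t` and `ξ`; both estimates follow by
multiplying with powers of `‖ξ‖`. As the norm is not differentiable at `0`, the argument is run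
with `√(‖·‖² + ε²)` and `ε → 0`.
-/

open Set MeasureTheory Filter Topology Real
open scoped RealInnerProductSpace

section RegNorm

variable {E : Type*} [NormedAddCommGroup E] {ε : ℝ}

noncomputable def regNorm (ε : ℝ) (x : E) : ℝ := √(‖x‖ ^ 2 + ε ^ 2)

lemma sq_regNorm (ε : ℝ) (x : E) : regNorm ε x ^ 2 = ‖x‖ ^ 2 + ε ^ 2 :=
  sq_sqrt (by positivity)

lemma norm_le_regNorm (ε : ℝ) (x : E) : ‖x‖ ≤ regNorm ε x :=
  le_sqrt_of_sq_le (by nlinarith [sq_nonneg ε])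

lemma abs_le_regNorm (ε : ℝ) (x : E) : |ε| ≤ regNorm ε x := by
  rw [← sqrt_sq_eq_abs]
  exact sqrt_le_sqrt (by nlinarith [sq_nonneg ‖x‖])

lemma regNorm_le_norm_add (hε : 0 ≤ ε) (x : E) : regNorm ε x ≤ ‖x‖ + ε :=
  sqrt_le_iff.2 ⟨by positivity, by nlinarith [norm_nonneg x]⟩

lemma regNorm_pos (hε : ε ≠ 0) (x : E) : 0 < regNorm ε x :=
  sqrt_pos.2 (by positivity)

lemma continuous_regNorm (ε : ℝ) : Continuous (regNorm (E := E) ε) := by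
  unfold regNorm; fun_prop

lemma HasDerivAt.regNorm [InnerProductSpace ℝ E] {f : ℝ → E} {f' : E} {x : ℝ}
    (hf : HasDerivAt f f' x) (hε : ε ≠ 0) :
    HasDerivAt (fun y => regNorm ε (f y)) (⟪f x, f'⟫ / regNorm ε (f x)) x := by
  have h := (hf.norm_sq.add_const (ε ^ 2)).sqrt (by positivity)
  rwa [mul_div_mul_left _ _ two_ne_zero] at h

end RegNorm

theorem le_mul_exp_integral_of_hasDerivAt_le {Φ Φ' k : ℝ → ℝ} {a b ε : ℝ} (hab : a ≤ b)
    (hε : 0 ≤ ε) (hk : ContinuousOn k (Icc a b)) (hk_nonneg : ∀ x ∈ Icc a b, 0 ≤ k x)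
    (hΦ : ContinuousOn Φ (Icc a b)) (hΦ' : ∀ x ∈ Ioo a b, HasDerivAt Φ (Φ' x) x)
    (hbound : ∀ x ∈ Ioo a b, Φ' x ≤ k x * Φ x + ε) :
    Φ b ≤ (Φ a + ε * (b - a)) * exp (∫ τ in a..b, k τ) := by
  set P : ℝ → ℝ := fun x => ∫ τ in a..x, k τ
  have hk_int : IntervalIntegrable k volume a b := (uIcc_of_le hab ▸ hk).intervalIntegrable
  have hP_cont : ContinuousOn P (Icc a b) := by
    simpa [uIcc_of_le hab] using
      intervalIntegral.continuousOn_primitive_interval' hk_int left_mem_uIcc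
  have hP_nonneg : ∀ x ∈ Icc a b, 0 ≤ P x := fun x hx =>
    intervalIntegral.integral_nonneg hx.1 fun τ hτ => hk_nonneg τ ⟨hτ.1, hτ.2.trans hx.2⟩
  have hP' : ∀ x ∈ Ioo a b, HasDerivAt P (k x) x := fun x hx =>
    intervalIntegral.integral_hasDerivAt_right
      (hk_int.mono_set (by
        rw [uIcc_of_le hab, uIcc_of_le hx.1.le]; exact Icc_subset_Icc_right hx.2.le))
      ((hk.mono Ioo_subset_Icc_self).stronglyMeasurableAtFilter isOpen_Ioo x hx)
      ((hk x (Ioo_subset_Icc_self hx)).continuousAt (Icc_mem_nhds hx.1 hx.2))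
  set W : ℝ → ℝ := fun x => Φ x * exp (-P x) - ε * x
  have hW : AntitoneOn W (Icc a b) := by
    refine antitoneOn_of_hasDerivWithinAt_nonpos (convex_Icc a b)
      ((hΦ.mul (continuous_exp.comp_continuousOn hP_cont.neg)).sub (by fun_prop))
      (f' := fun x => (Φ' x - k x * Φ x) * exp (-P x) - ε) ?_ ?_
    · rw [interior_Icc]
      intro x hx
      have := ((hΦ' x hx).mul (hP' x hx).neg.exp).sub ((hasDerivAt_id x).const_mul ε)
      exact this.hasDerivWithinAt.congr_deriv (by simp only [Pi.neg_apply]; ring)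
    · rw [interior_Icc]
      intro x hx
      have h1 : exp (-P x) ≤ 1 :=
        exp_le_one_iff.2 (neg_nonpos.2 (hP_nonneg x (Ioo_subset_Icc_self hx)))
      nlinarith [hbound x hx, exp_pos (-P x)]
  have hWb := hW (left_mem_Icc.2 hab) (right_mem_Icc.2 hab) hab
  have hP_a : P a = 0 := intervalIntegral.integral_same
  simp only [W, hP_a, neg_zero, exp_zero, mul_one] at hWb
  calc Φ b = Φ b * exp (-P b) * exp (P b) := by rw [mul_assoc, ← exp_add]; simp
    _ ≤ (Φ a + ε * (b - a)) * exp (P b) := by gcongr; linarith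

theorem intervalIntegral_le_integral_Ici {f : ℝ → ℝ} {a b : ℝ} (hab : a ≤ b)
    (hf : IntegrableOn f (Ici a)) (hf_nonneg : ∀ x ∈ Ici a, 0 ≤ f x) :
    ∫ x in a..b, f x ≤ ∫ x in Ici a, f x := by
  rw [intervalIntegral.integral_of_le hab]
  exact setIntegral_mono_set hf ((ae_restrict_mem measurableSet_Ici).mono hf_nonneg)
    (Ioc_subset_Icc_self.trans Icc_subset_Ici_self).eventuallyLE

section DampedWave

variable {E : Type*} [NormedAddCommGroup E] [InnerProductSpace ℝ E]

theorem dampedWave_energy_deriv_le {a g g' ε : ℝ} (ha : 0 ≤ a) (hg : 0 < g) (hg' : 0 ≤ g')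
    (hε : 0 < ε) {x y z : E} (hz : z + a • x + (g * a) • y = 0) :
    a * (⟪x, y⟫ / regNorm ε x) + (⟪y, z⟫ / regNorm ε y * g - regNorm ε y * g') / g ^ 2 ≤
      1 / g * (a * regNorm ε x + regNorm ε y / g) + a * ε := by
  set σx := regNorm ε x
  set σy := regNorm ε y
  have hσx : 0 < σx := regNorm_pos hε.ne' x
  have hσy : 0 < σy := regNorm_pos hε.ne' y
  have hεσy : ε ≤ σy := (le_abs_self ε).trans (abs_le_regNorm ε y)
  have hxy : |⟪x, y⟫| ≤ σx * σy := (abs_real_inner_le_norm x y).trans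
    (mul_le_mul (norm_le_regNorm ε x) (norm_le_regNorm ε y) (norm_nonneg y) hσx.le)
  have hyz : ⟪y, z⟫ = -(a * ⟪x, y⟫) - g * a * (σy ^ 2 - ε ^ 2) := by
    have hz' : z = -(a • x) - (g * a) • y := by rw [← sub_eq_zero, ← hz]; abel
    rw [hz', sq_regNorm, add_sub_cancel_right]
    simp only [inner_sub_right, inner_neg_right, inner_smul_right, real_inner_self_eq_norm_sq,
      real_inner_comm x y]
  have hfirst : ⟪x, y⟫ / σx ≤ σy := by
    rw [div_le_iff₀ hσx]; linarith [le_abs_self ⟪x, y⟫]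
  -- the damping term `-g a ‖y‖²` absorbs the coupling term up to `a ε`
  have hsecond : ⟪y, z⟫ / σy ≤ a * σx - g * a * σy + g * a * ε := by
    rw [div_le_iff₀ hσy, hyz]
    nlinarith [neg_abs_le ⟪x, y⟫, mul_le_mul_of_nonneg_left hεσy (mul_nonneg hg.le ha),
      mul_nonneg (mul_nonneg hg.le ha) hε.le]
  have hdamp : (⟪y, z⟫ / σy * g - σy * g') / g ^ 2 ≤ a * σx / g - a * σy + a * ε := by
    rw [div_le_iff₀ (by positivity)]
    have : a * σx / g * g ^ 2 = a * σx * g := by field_simp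
    nlinarith [mul_le_mul_of_nonneg_right hsecond hg.le, mul_nonneg hσy.le hg']
  calc _ ≤ a * σy + (a * σx / g - a * σy + a * ε) :=
        add_le_add (mul_le_mul_of_nonneg_left hfirst ha) hdamp
    _ ≤ 1 / g * (a * σx + σy / g) + a * ε := by
        have : 1 / g * (a * σx + σy / g) = a * σx / g + σy / g ^ 2 := by ring
        linarith [show 0 ≤ σy / g ^ 2 by positivity]

theorem dampedWave_energy_le {g g' : ℝ → ℝ} {a : ℝ} {u u' u'' : ℝ → E} (ha : 0 ≤ a)
    (hg : ∀ t ∈ Ici (0:ℝ), HasDerivWithinAt g (g' t) (Ici 0) t)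
    (hg_pos : ∀ t ∈ Ici (0:ℝ), 0 < g t) (hg'_nonneg : ∀ t ∈ Ici (0:ℝ), 0 ≤ g' t)
    (hu : ∀ t ∈ Ici (0:ℝ), HasDerivWithinAt u (u' t) (Ici 0) t)
    (hu' : ∀ t ∈ Ici (0:ℝ), HasDerivWithinAt u' (u'' t) (Ici 0) t)
    (heq : ∀ t ∈ Ici (0:ℝ), u'' t + a • u t + (g t * a) • u' t = 0) {t : ℝ} (ht : 0 ≤ t) :
    a * ‖u t‖ + ‖u' t‖ / g t ≤ (a * ‖u 0‖ + ‖u' 0‖ / g 0) * exp (∫ τ in 0..t, 1 / g τ) := by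
  have hg0 : 0 < g 0 := hg_pos 0 self_mem_Ici
  have hg_ne : ∀ x ∈ Icc 0 t, g x ≠ 0 := fun x hx => (hg_pos x hx.1).ne'
  have hcont {f f' : ℝ → E} (hf : ∀ x ∈ Ici (0:ℝ), HasDerivWithinAt f (f' x) (Ici 0) x) :
      ContinuousOn f (Icc 0 t) := fun x hx =>
    (hf x hx.1).continuousWithinAt.mono Icc_subset_Ici_self
  have hg_cont : ContinuousOn g (Icc 0 t) := fun x hx =>
    (hg x hx.1).continuousWithinAt.mono Icc_subset_Ici_self
  set P := ∫ τ in 0..t, 1 / g τ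
  have hregularized : ∀ ε > 0, a * ‖u t‖ + ‖u' t‖ / g t ≤
      (a * (‖u 0‖ + ε) + (‖u' 0‖ + ε) / g 0 + a * ε * t) * exp P := by
    intro ε hε
    set Φ : ℝ → ℝ := fun x => a * regNorm ε (u x) + regNorm ε (u' x) / g x
    have hΦ : ContinuousOn Φ (Icc 0 t) :=
      (continuousOn_const.mul ((continuous_regNorm ε).comp_continuousOn (hcont hu))).add
        (((continuous_regNorm ε).comp_continuousOn (hcont hu')).div hg_cont hg_ne)
    have hΦ' : ∀ x ∈ Ioo 0 t, HasDerivAt Φ (a * (⟪u x, u' x⟫ / regNorm ε (u x)) +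
        (⟪u' x, u'' x⟫ / regNorm ε (u' x) * g x - regNorm ε (u' x) * g' x) / g x ^ 2) x := by
      intro x hx
      have hnhds : Ici (0:ℝ) ∈ 𝓝 x := Ici_mem_nhds hx.1
      exact ((((hu x hx.1.le).hasDerivAt hnhds).regNorm hε.ne').const_mul a).add
        ((((hu' x hx.1.le).hasDerivAt hnhds).regNorm hε.ne').div
          ((hg x hx.1.le).hasDerivAt hnhds) (hg_pos x hx.1.le).ne')
    have hgronwall := le_mul_exp_integral_of_hasDerivAt_le ht (by positivity)
      (continuousOn_const.div hg_cont hg_ne) (fun x hx => (one_div_pos.2 (hg_pos x hx.1)).le)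
      hΦ hΦ' fun x hx => dampedWave_energy_deriv_le ha (hg_pos x hx.1.le)
        (hg'_nonneg x hx.1.le) hε (heq x hx.1.le)
    have hΦt : a * ‖u t‖ + ‖u' t‖ / g t ≤ Φ t := by
      simp only [Φ]
      gcongr
      exacts [norm_le_regNorm ε _, (hg_pos t ht).le, norm_le_regNorm ε _]
    have hΦ0 : Φ 0 ≤ a * (‖u 0‖ + ε) + (‖u' 0‖ + ε) / g 0 := by
      simp only [Φ]
      gcongr
      exacts [regNorm_le_norm_add hε.le _, regNorm_le_norm_add hε.le _]
    calc _ ≤ Φ t := hΦt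
      _ ≤ (Φ 0 + a * ε * (t - 0)) * exp P := hgronwall
      _ ≤ _ := by rw [sub_zero]; gcongr
  refine ge_of_tendsto (x := 𝓝[>] 0) ?_ (eventually_nhdsWithin_of_forall hregularized)
  have : Continuous fun ε : ℝ => (a * (‖u 0‖ + ε) + (‖u' 0‖ + ε) / g 0 + a * ε * t) * exp P := by
    fun_prop
  simpa using (this.tendsto 0).mono_left nhdsWithin_le_nhds

theorem dampedWave_energy_le_uniform {g g' : ℝ → ℝ} {a : ℝ} {u u' u'' : ℝ → E} (ha : 0 ≤ a)
    (hg : ∀ t ∈ Ici (0:ℝ), HasDerivWithinAt g (g' t) (Ici 0) t)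
    (hg_pos : ∀ t ∈ Ici (0:ℝ), 0 < g t) (hg'_nonneg : ∀ t ∈ Ici (0:ℝ), 0 ≤ g' t)
    (hg_inv : IntegrableOn (fun t => 1 / g t) (Ici 0))
    (hu : ∀ t ∈ Ici (0:ℝ), HasDerivWithinAt u (u' t) (Ici 0) t)
    (hu' : ∀ t ∈ Ici (0:ℝ), HasDerivWithinAt u' (u'' t) (Ici 0) t)
    (heq : ∀ t ∈ Ici (0:ℝ), u'' t + a • u t + (g t * a) • u' t = 0) {t : ℝ} (ht : 0 ≤ t) :
    a * ‖u t‖ + ‖u' t‖ / g t ≤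
      exp (∫ τ in Ici (0:ℝ), 1 / g τ) * (1 + 1 / g 0) * (a * ‖u 0‖ + ‖u' 0‖) := by
  have hg0 := hg_pos 0 self_mem_Ici
  have hweights : a * ‖u 0‖ + ‖u' 0‖ / g 0 ≤ (1 + 1 / g 0) * (a * ‖u 0‖ + ‖u' 0‖) := by
    have : (1 + 1 / g 0) * (a * ‖u 0‖ + ‖u' 0‖) =
        a * ‖u 0‖ + ‖u' 0‖ / g 0 + (‖u' 0‖ + a * ‖u 0‖ / g 0) := by ring
    rw [this]
    linarith [show 0 ≤ ‖u' 0‖ + a * ‖u 0‖ / g 0 by positivity]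
  calc _ ≤ (a * ‖u 0‖ + ‖u' 0‖ / g 0) * exp (∫ τ in 0..t, 1 / g τ) :=
        dampedWave_energy_le ha hg hg_pos hg'_nonneg hu hu' heq ht
    _ ≤ (a * ‖u 0‖ + ‖u' 0‖ / g 0) * exp (∫ τ in Ici (0:ℝ), 1 / g τ) := by
        gcongr
        exact intervalIntegral_le_integral_Ici ht hg_inv fun x hx =>
          (one_div_pos.2 (hg_pos x hx)).le
    _ ≤ _ := by
        rw [mul_comm, mul_assoc]
        gcongr

end DampedWave

theorem stmt_5_general
    (n : ℕ)
    (g g' : ℝ → ℝ)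
    (hg_deriv : ∀ t ∈ Ici (0:ℝ), HasDerivWithinAt g (g' t) (Ici 0) t)
    (hA1 : ∀ t ∈ Ici (0:ℝ), 0 < g t ∧ 0 < g' t)
    (hA2 : IntegrableOn (fun t => 1 / g t) (Ici 0))
    (N : ℝ) :
    ∃ C > (0:ℝ),
      ∀ (ξ : EuclideanSpace ℝ (Fin n)),
      ∀ (u u' u'' : ℝ → ℂ),
      (∀ t ∈ Ici (0:ℝ), HasDerivWithinAt u (u' t) (Ici 0) t) →
      (∀ t ∈ Ici (0:ℝ), HasDerivWithinAt u' (u'' t) (Ici 0) t) →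
      ContinuousOn u'' (Ici 0) →
      (∀ t ∈ Ici (0:ℝ),
        u'' t + (‖ξ‖ : ℂ) ^ 2 * u t + (g t : ℂ) * (‖ξ‖ : ℂ) ^ 2 * u' t = 0) →
      ∀ t : ℝ, 0 ≤ t →
        ((1/2) * ∫ τ in (0:ℝ)..t, g τ) * ‖ξ‖ ^ 2 ≤ N →
        (∀ s : ℝ, 2 ≤ s →
          ‖ξ‖ ^ s * ‖u t‖ ≤ C * (‖ξ‖ ^ s * ‖u 0‖ + ‖ξ‖ ^ (s - 2) * ‖u' 0‖)) ∧
        (∀ r : ℝ, 0 ≤ r →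
          ‖ξ‖ ^ r * ‖u' t‖ ≤
            C * g t * (‖ξ‖ ^ (r + 2) * ‖u 0‖ + ‖ξ‖ ^ r * ‖u' 0‖)) := by
  have hg_pos : ∀ t ∈ Ici (0:ℝ), 0 < g t := fun t ht => (hA1 t ht).1
  have hg0 := hg_pos 0 self_mem_Ici
  refine ⟨exp (∫ τ in Ici (0:ℝ), 1 / g τ) * (1 + 1 / g 0), by positivity,
    fun ξ u u' u'' hu hu' _ hode t ht _ => ?_⟩
  have heq (x : ℝ) (hx : x ∈ Ici (0:ℝ)) :
      u'' x + (‖ξ‖ ^ 2) • u x + (g x * ‖ξ‖ ^ 2) • u' x = 0 := by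
    rw [Complex.real_smul, Complex.real_smul]
    push_cast
    linear_combination hode x hx
  have henergy := dampedWave_energy_le_uniform (by positivity) hg_deriv hg_pos
    (fun x hx => (hA1 x hx).2.le) hA2 hu hu' heq ht
  set C := exp (∫ τ in Ici (0:ℝ), 1 / g τ) * (1 + 1 / g 0)
  have hpow (p : ℝ) (hp : p + 2 ≠ 0) : ‖ξ‖ ^ (p + 2) = ‖ξ‖ ^ p * ‖ξ‖ ^ 2 := by
    rw [rpow_add' (norm_nonneg _) hp, rpow_two]
  constructor
  · intro s hs
    have hu_t : ‖ξ‖ ^ 2 * ‖u t‖ ≤ C * (‖ξ‖ ^ 2 * ‖u 0‖ + ‖u' 0‖) := by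
      linarith [show 0 ≤ ‖u' t‖ / g t by have := hg_pos t ht; positivity]
    rw [← sub_add_cancel s 2, hpow (s - 2) (by linarith), add_sub_cancel_right]
    calc _ = ‖ξ‖ ^ (s - 2) * (‖ξ‖ ^ 2 * ‖u t‖) := by ring
      _ ≤ ‖ξ‖ ^ (s - 2) * (C * (‖ξ‖ ^ 2 * ‖u 0‖ + ‖u' 0‖)) := by gcongr
      _ = _ := by ring
  · intro r hr
    have hu'_t : ‖u' t‖ ≤ g t * (C * (‖ξ‖ ^ 2 * ‖u 0‖ + ‖u' 0‖)) := by
      rw [← div_le_iff₀' (hg_pos t ht)]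
      linarith [show 0 ≤ ‖ξ‖ ^ 2 * ‖u t‖ by positivity]
    rw [hpow r (by linarith)]
    calc _ ≤ ‖ξ‖ ^ r * (g t * (C * (‖ξ‖ ^ 2 * ‖u 0‖ + ‖u' 0‖))) := by gcongr
      _ = _ := by ring

theorem stmt_5
    (n : ℕ)
    (g g' g'' : ℝ → ℝ)
    (hg_deriv : ∀ t ∈ Ici (0:ℝ), HasDerivWithinAt g (g' t) (Ici 0) t)
    (hg_deriv' : ∀ t ∈ Ici (0:ℝ), HasDerivWithinAt g' (g'' t) (Ici 0) t)
    (hg_cont : ContinuousOn g'' (Ici 0))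
    (hA1 : ∀ t ∈ Ici (0:ℝ), 0 < g t ∧ 0 < g' t)
    (hA2 : IntegrableOn (fun t => 1 / g t) (Ici 0))
    (hA3 : ∃ C₁ > (0:ℝ), ∃ C₂ > (0:ℝ), ∀ t ∈ Ici (0:ℝ),
      |g' t| * ((1/2) * ∫ τ in (0:ℝ)..t, g τ) ≤ C₁ * g t * g t ∧
      |g'' t| * ((1/2) * ∫ τ in (0:ℝ)..t, g τ) ^ 2 ≤ C₂ * g t * g t ^ 2)
    (N : ℝ) (hN : 0 < N) :
    ∃ C > (0:ℝ),
      ∀ (ξ : EuclideanSpace ℝ (Fin n)),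
      ∀ (u u' u'' : ℝ → ℂ),
      (∀ t ∈ Ici (0:ℝ), HasDerivWithinAt u (u' t) (Ici 0) t) →
      (∀ t ∈ Ici (0:ℝ), HasDerivWithinAt u' (u'' t) (Ici 0) t) →
      ContinuousOn u'' (Ici 0) →
      (∀ t ∈ Ici (0:ℝ),
        u'' t + (‖ξ‖ : ℂ) ^ 2 * u t + (g t : ℂ) * (‖ξ‖ : ℂ) ^ 2 * u' t = 0) →
      ∀ t : ℝ, 0 ≤ t →
        ((1/2) * ∫ τ in (0:ℝ)..t, g τ) * ‖ξ‖ ^ 2 ≤ N →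
        (∀ s : ℝ, 2 ≤ s →
          ‖ξ‖ ^ s * ‖u t‖ ≤ C * (‖ξ‖ ^ s * ‖u 0‖ + ‖ξ‖ ^ (s - 2) * ‖u' 0‖)) ∧
        (∀ r : ℝ, 0 ≤ r →
          ‖ξ‖ ^ r * ‖u' t‖ ≤
            C * g t * (‖ξ‖ ^ (r + 2) * ‖u 0‖ + ‖ξ‖ ^ r * ‖u' 0‖)) :=
  stmt_5_general n g g' hg_deriv hA1 hA2 N
end

section
/- Assume g ∈ C²([0,∞)) satisfies (B1) g(t)>0 and g'(t)<0, (B2) g ∈ L¹(0,∞), and (B3) |g'(t)| ≤ C₁g(t), |g''(t)| ≤ C₂g(t). Let ε ∈ (0,1]. Consider the 2×2 complex matrix A(t,ξ) with entries A₁₁ = 0, A₁₂ = |ξ|, A₂₁ = |ξ|, A₂₂ = i g(t)|ξ|², and let E_U(·,s,ξ) be the fundamental solution, i.e. ∂_t E_U(t,s,ξ) = i A(t,ξ) E_U(t,s,ξ), E_U(s,s,ξ) = I. Then there exists C > 0 such that for all ξ and all 0 ≤ s ≤ t with g(s)|ξ| ≤ ε (hence g(τ)|ξ| ≤ ε for all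 τ ∈ [s,t] since g is decreasing), every entry satisfies |E_U^{(kℓ)}(t,s,ξ)| ≤ C exp( −(3/8) |ξ|² ∫_s^t g(τ)dτ ). -/
/-!
For `ω = ‖ξ‖`, a column `(y₁, y₂)` of the fundamental solution solves `y₁' = i ω y₂`,
`y₂' = i ω y₁ - g ω² y₂`. The energy `‖y₁‖² + ‖y₂‖²` only dissipates through `y₂`, so we add the
correction `g ω ⟪y₁, i y₂⟫_ℝ`. The corrected energy `Q` satisfies
`Q' = -g ω² Q + g' ω ⟪y₁, i y₂⟫_ℝ`; as `|g ω| ≤ 1` in the hyperbolic zone, `Q` is comparable to the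
energy and, because `g' ≤ 0`, `Q · exp (ω² ∫ₛ^τ g + ω g τ)` is nonincreasing. This gives
`‖y(t)‖² ≤ 3e · exp (-ω² ∫ₛᵗ g)`, i.e. decay at rate `1/2 > 3/8` for each entry.
-/

open Set MeasureTheory Topology
open Complex (I)

-- `δ` stands for `g(τ) ‖ξ‖`, and `⟪z, I * w⟫_ℝ = Im (z * conj w)`.
noncomputable def dampedEnergy (δ : ℝ) (z w : ℂ) : ℝ :=
  ‖z‖ ^ 2 + ‖w‖ ^ 2 + δ * inner ℝ z (I * w)

lemma abs_inner_I_mul_le (z w : ℂ) : |inner ℝ z (I * w)| ≤ (‖z‖ ^ 2 + ‖w‖ ^ 2) / 2 := by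
  have h := abs_real_inner_le_norm z (I * w)
  rw [norm_mul, Complex.norm_I, one_mul] at h
  nlinarith [sq_nonneg (‖z‖ - ‖w‖)]

section DampedEnergy

variable {δ : ℝ} (z w : ℂ)

lemma abs_mul_inner_I_mul_le (hδ : |δ| ≤ 1) :
    |δ * inner ℝ z (I * w)| ≤ (‖z‖ ^ 2 + ‖w‖ ^ 2) / 2 := by
  rw [abs_mul]
  exact (mul_le_of_le_one_left (abs_nonneg _) hδ).trans (abs_inner_I_mul_le z w)

lemma norm_sq_add_norm_sq_le_two_mul_dampedEnergy (hδ : |δ| ≤ 1) :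
    ‖z‖ ^ 2 + ‖w‖ ^ 2 ≤ 2 * dampedEnergy δ z w := by
  unfold dampedEnergy
  linarith [neg_abs_le (δ * inner ℝ z (I * w)), abs_mul_inner_I_mul_le z w hδ]

lemma dampedEnergy_le (hδ : |δ| ≤ 1) :
    dampedEnergy δ z w ≤ 3 / 2 * (‖z‖ ^ 2 + ‖w‖ ^ 2) := by
  unfold dampedEnergy
  linarith [le_abs_self (δ * inner ℝ z (I * w)), abs_mul_inner_I_mul_le z w hδ]

lemma dampedEnergy_add_inner_nonneg (hδ : |δ| ≤ 1) :
    0 ≤ dampedEnergy δ z w + inner ℝ z (I * w) := by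
  unfold dampedEnergy
  linarith [abs_mul_inner_I_mul_le z w hδ, abs_inner_I_mul_le z w,
    neg_abs_le (δ * inner ℝ z (I * w)), neg_abs_le (inner ℝ z (I * w))]

end DampedEnergy

section DampedWave

variable {g : ℝ → ℝ} {ω τ : ℝ} {y₁ y₂ : ℝ → ℂ}

lemma hasDerivAt_norm_sq_add_norm_sq (h₁ : HasDerivAt y₁ (I * ω * y₂ τ) τ)
    (h₂ : HasDerivAt y₂ (I * ω * y₁ τ - ((g τ * ω ^ 2 : ℝ) : ℂ) * y₂ τ) τ) :
    HasDerivAt (fun τ => ‖y₁ τ‖ ^ 2 + ‖y₂ τ‖ ^ 2) (-2 * g τ * ω ^ 2 * ‖y₂ τ‖ ^ 2) τ := by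
  refine (h₁.norm_sq.add h₂.norm_sq).congr_deriv ?_
  simp only [Complex.inner, Complex.sq_norm, Complex.normSq_apply, Complex.mul_re,
    Complex.mul_im, Complex.sub_re, Complex.sub_im, Complex.conj_re, Complex.conj_im,
    Complex.I_re, Complex.I_im, Complex.ofReal_re, Complex.ofReal_im]
  ring

lemma hasDerivAt_inner_I_mul (h₁ : HasDerivAt y₁ (I * ω * y₂ τ) τ)
    (h₂ : HasDerivAt y₂ (I * ω * y₁ τ - ((g τ * ω ^ 2 : ℝ) : ℂ) * y₂ τ) τ) :
    HasDerivAt (fun τ => inner ℝ (y₁ τ) (I * y₂ τ))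
      (ω * ‖y₂ τ‖ ^ 2 - ω * ‖y₁ τ‖ ^ 2 - g τ * ω ^ 2 * inner ℝ (y₁ τ) (I * y₂ τ)) τ := by
  refine (h₁.inner ℝ (h₂.const_mul I)).congr_deriv ?_
  simp only [Complex.inner, Complex.sq_norm, Complex.normSq_apply, Complex.mul_re,
    Complex.mul_im, Complex.sub_re, Complex.sub_im, Complex.conj_re, Complex.conj_im,
    Complex.I_re, Complex.I_im, Complex.ofReal_re, Complex.ofReal_im]
  ring

lemma hasDerivAt_weighted_dampedEnergy {g' φ : ℝ → ℝ} (hg : HasDerivAt g (g' τ) τ)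
    (hφ : HasDerivAt φ (g τ) τ) (h₁ : HasDerivAt y₁ (I * ω * y₂ τ) τ)
    (h₂ : HasDerivAt y₂ (I * ω * y₁ τ - ((g τ * ω ^ 2 : ℝ) : ℂ) * y₂ τ) τ) :
    HasDerivAt
      (fun τ => dampedEnergy (g τ * ω) (y₁ τ) (y₂ τ) * Real.exp (ω ^ 2 * φ τ + ω * g τ))
      (ω * g' τ * (dampedEnergy (g τ * ω) (y₁ τ) (y₂ τ) + inner ℝ (y₁ τ) (I * y₂ τ)) *
        Real.exp (ω ^ 2 * φ τ + ω * g τ)) τ := by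
  refine (((hasDerivAt_norm_sq_add_norm_sq h₁ h₂).add ((hg.mul_const ω).mul
    (hasDerivAt_inner_I_mul h₁ h₂))).mul
    ((hφ.const_mul (ω ^ 2)).add (hg.const_mul ω)).exp).congr_deriv ?_
  simp only [dampedEnergy, Pi.add_apply, Pi.mul_apply]
  ring

end DampedWave

section Lyapunov

variable {g g' : ℝ → ℝ} {ω s t : ℝ} {y₁ y₂ : ℝ → ℂ}

lemma antitoneOn_weighted_dampedEnergy (hω : 0 ≤ ω) (hst : s ≤ t)
    (hg : ∀ x ∈ Icc s t, HasDerivWithinAt g (g' x) (Icc s t) x)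
    (hg' : ∀ x ∈ Ioo s t, g' x ≤ 0) (hδ : ∀ x ∈ Icc s t, |g x * ω| ≤ 1)
    (h₁ : ∀ τ ∈ Icc s t, HasDerivAt y₁ (I * ω * y₂ τ) τ)
    (h₂ : ∀ τ ∈ Icc s t, HasDerivAt y₂ (I * ω * y₁ τ - ((g τ * ω ^ 2 : ℝ) : ℂ) * y₂ τ) τ) :
    AntitoneOn (fun τ => dampedEnergy (g τ * ω) (y₁ τ) (y₂ τ) *
      Real.exp (ω ^ 2 * (∫ u in s..τ, g u) + ω * g τ)) (Icc s t) := by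
  have hgc : ContinuousOn g (Icc s t) := fun x hx => (hg x hx).continuousWithinAt
  have hφc : ContinuousOn (fun τ => ∫ u in s..τ, g u) (Icc s t) := by
    simpa only [uIcc_of_le hst] using intervalIntegral.continuousOn_primitive_interval'
      (hgc.intervalIntegrable_of_Icc hst) left_mem_uIcc
  have hy₁c : ContinuousOn y₁ (Icc s t) := fun τ hτ => (h₁ τ hτ).continuousAt.continuousWithinAt
  have hy₂c : ContinuousOn y₂ (Icc s t) := fun τ hτ => (h₂ τ hτ).continuousAt.continuousWithinAt
  refine antitoneOn_of_hasDerivWithinAt_nonpos (convex_Icc s t) ?_ (fun x hx => ?_)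
    (fun x hx => ?_) (f' := fun τ => ω * g' τ *
      (dampedEnergy (g τ * ω) (y₁ τ) (y₂ τ) + inner ℝ (y₁ τ) (I * y₂ τ)) *
      Real.exp (ω ^ 2 * (∫ u in s..τ, g u) + ω * g τ))
  · unfold dampedEnergy
    fun_prop
  · rw [interior_Icc] at hx ⊢
    have hxI : x ∈ Icc s t := Ioo_subset_Icc_self hx
    have hφ : HasDerivAt (fun τ => ∫ u in s..τ, g u) (g x) x :=
      intervalIntegral.integral_hasDerivAt_right
        ((hgc.mono (Icc_subset_Icc_right hx.2.le)).intervalIntegrable_of_Icc hx.1.le)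
        ((hgc.mono Ioo_subset_Icc_self).stronglyMeasurableAtFilter isOpen_Ioo x hx)
        (hgc.continuousAt (Icc_mem_nhds hx.1 hx.2))
    exact (hasDerivAt_weighted_dampedEnergy ((hg x hxI).hasDerivAt (Icc_mem_nhds hx.1 hx.2))
      hφ (h₁ x hxI) (h₂ x hxI)).hasDerivWithinAt
  · rw [interior_Icc] at hx
    exact mul_nonpos_of_nonpos_of_nonneg (mul_nonpos_of_nonpos_of_nonneg
      (mul_nonpos_of_nonneg_of_nonpos hω (hg' x hx))
      (dampedEnergy_add_inner_nonneg _ _ (hδ x (Ioo_subset_Icc_self hx)))) (Real.exp_pos _).le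

theorem norm_sq_add_norm_sq_le_of_dampedWave (hω : 0 ≤ ω) (hst : s ≤ t)
    (hg : ∀ x ∈ Icc s t, HasDerivWithinAt g (g' x) (Icc s t) x)
    (hg' : ∀ x ∈ Ioo s t, g' x ≤ 0) (hg_nonneg : ∀ x ∈ Icc s t, 0 ≤ g x) (hgs : g s * ω ≤ 1)
    (h₁ : ∀ τ ∈ Icc s t, HasDerivAt y₁ (I * ω * y₂ τ) τ)
    (h₂ : ∀ τ ∈ Icc s t, HasDerivAt y₂ (I * ω * y₁ τ - ((g τ * ω ^ 2 : ℝ) : ℂ) * y₂ τ) τ) :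
    ‖y₁ t‖ ^ 2 + ‖y₂ t‖ ^ 2 ≤
      3 * Real.exp 1 * (‖y₁ s‖ ^ 2 + ‖y₂ s‖ ^ 2) * Real.exp (-(ω ^ 2 * ∫ u in s..t, g u)) := by
  have hs : s ∈ Icc s t := left_mem_Icc.2 hst
  have ht : t ∈ Icc s t := right_mem_Icc.2 hst
  have hg_anti : AntitoneOn g (Icc s t) :=
    antitoneOn_of_hasDerivWithinAt_nonpos (convex_Icc s t)
      (fun x hx => (hg x hx).continuousWithinAt)
      (fun x hx => (hg x (interior_subset hx)).mono interior_subset)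
      (fun x hx => hg' x (by rwa [interior_Icc] at hx))
  have hδ : ∀ x ∈ Icc s t, |g x * ω| ≤ 1 := fun x hx => abs_le.2
    ⟨by nlinarith [hg_nonneg x hx], (mul_le_mul_of_nonneg_right (hg_anti hs hx hx.1) hω).trans hgs⟩
  have hF := antitoneOn_weighted_dampedEnergy hω hst hg hg' hδ h₁ h₂ hs ht hst
  simp only [intervalIntegral.integral_same, mul_zero, zero_add] at hF
  set X := ω ^ 2 * ∫ u in s..t, g u
  have hQs := dampedEnergy_le (y₁ s) (y₂ s) (hδ s hs)
  have hexp : Real.exp (X + ω * g t) * Real.exp (-X - ω * g t) = 1 := by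
    rw [← Real.exp_add, ← Real.exp_zero]
    ring_nf
  have hgap : ω * g s - ω * g t ≤ 1 := by nlinarith [hg_nonneg t ht]
  calc ‖y₁ t‖ ^ 2 + ‖y₂ t‖ ^ 2
      ≤ 2 * dampedEnergy (g t * ω) (y₁ t) (y₂ t) :=
        norm_sq_add_norm_sq_le_two_mul_dampedEnergy _ _ (hδ t ht)
    _ = 2 * (dampedEnergy (g t * ω) (y₁ t) (y₂ t) * Real.exp (X + ω * g t)) *
          Real.exp (-X - ω * g t) := by
        linear_combination (-2 * dampedEnergy (g t * ω) (y₁ t) (y₂ t)) * hexp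
    _ ≤ 2 * (dampedEnergy (g s * ω) (y₁ s) (y₂ s) * Real.exp (ω * g s)) *
          Real.exp (-X - ω * g t) := by gcongr
    _ = 2 * dampedEnergy (g s * ω) (y₁ s) (y₂ s) * Real.exp (ω * g s - ω * g t) *
          Real.exp (-X) := by
        simp only [Real.exp_sub]
        ring
    _ ≤ 2 * (3 / 2 * (‖y₁ s‖ ^ 2 + ‖y₂ s‖ ^ 2)) * Real.exp 1 * Real.exp (-X) := by gcongr
    _ = 3 * Real.exp 1 * (‖y₁ s‖ ^ 2 + ‖y₂ s‖ ^ 2) * Real.exp (-X) := by ring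

end Lyapunov

lemma le_three_mul_exp_of_sq_le {r X : ℝ} (hX : 0 ≤ X)
    (h : r ^ 2 ≤ 3 * Real.exp 1 * Real.exp (-X)) : r ≤ 3 * Real.exp (-(3 / 8) * X) := by
  refine le_of_pow_le_pow_left₀ two_ne_zero (by positivity) ?_
  calc r ^ 2 ≤ 3 * Real.exp 1 * Real.exp (-X) := h
    _ ≤ 3 * 3 * Real.exp (-(3 / 4) * X) := by
        gcongr
        · exact Real.exp_one_lt_three.le
        · linarith
    _ = (3 * Real.exp (-(3 / 8) * X)) ^ 2 := by
        rw [mul_pow, ← Real.exp_nat_mul]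
        ring_nf

theorem norm_le_of_dampedWave_column {g g' : ℝ → ℝ} {ω s t : ℝ} {y₁ y₂ : ℝ → ℂ}
    (hω : 0 ≤ ω) (hst : s ≤ t)
    (hg : ∀ x ∈ Icc s t, HasDerivWithinAt g (g' x) (Icc s t) x)
    (hg' : ∀ x ∈ Ioo s t, g' x ≤ 0) (hg_nonneg : ∀ x ∈ Icc s t, 0 ≤ g x) (hgs : g s * ω ≤ 1)
    (h₁ : ∀ τ ∈ Icc s t, HasDerivAt y₁ (I * ((0 : ℂ) * y₁ τ + (ω : ℂ) * y₂ τ)) τ)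
    (h₂ : ∀ τ ∈ Icc s t,
      HasDerivAt y₂ (I * ((ω : ℂ) * y₁ τ + (I * ((g τ * ω ^ 2 : ℝ) : ℂ)) * y₂ τ)) τ)
    (h_init : ‖y₁ s‖ ^ 2 + ‖y₂ s‖ ^ 2 = 1) :
    ‖y₁ t‖ ≤ 3 * Real.exp (-(3 / 8) * ω ^ 2 * ∫ u in s..t, g u) ∧
      ‖y₂ t‖ ≤ 3 * Real.exp (-(3 / 8) * ω ^ 2 * ∫ u in s..t, g u) := by
  have hE := norm_sq_add_norm_sq_le_of_dampedWave hω hst hg hg' hg_nonneg hgs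
    (fun τ hτ => (h₁ τ hτ).congr_deriv (by ring))
    (fun τ hτ => (h₂ τ hτ).congr_deriv
      (by linear_combination (((g τ * ω ^ 2 : ℝ) : ℂ) * y₂ τ) * Complex.I_sq))
  rw [h_init, mul_one] at hE
  have hX : 0 ≤ ω ^ 2 * ∫ u in s..t, g u :=
    mul_nonneg (sq_nonneg ω) (intervalIntegral.integral_nonneg hst hg_nonneg)
  rw [mul_assoc]
  exact ⟨le_three_mul_exp_of_sq_le hX (by linarith [sq_nonneg ‖y₂ t‖]),
    le_three_mul_exp_of_sq_le hX (by linarith [sq_nonneg ‖y₁ t‖])⟩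

theorem stmt_7_general
    (n : ℕ)
    (g g' : ℝ → ℝ)
    (hg_deriv : ∀ t ∈ Ici (0:ℝ), HasDerivWithinAt g (g' t) (Ici 0) t)
    (hB1 : ∀ t ∈ Ici (0:ℝ), 0 < g t ∧ g' t < 0)
    (ε : ℝ) (hε2 : ε ≤ 1) :
    ∃ C > (0:ℝ),
      ∀ (ξ : EuclideanSpace ℝ (Fin n)),
      ∀ s t : ℝ, 0 ≤ s → s ≤ t → g s * ‖ξ‖ ≤ ε →
      ∀ E11 E12 E21 E22 : ℝ → ℂ,
        E11 s = 1 → E12 s = 0 → E21 s = 0 → E22 s = 1 →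
        (∀ τ ∈ Ici s,
          HasDerivAt E11 (Complex.I * ((0 : ℂ) * E11 τ + ((‖ξ‖ : ℝ) : ℂ) * E21 τ)) τ ∧
          HasDerivAt E21 (Complex.I * (((‖ξ‖ : ℝ) : ℂ) * E11 τ + (Complex.I * ((g τ * ‖ξ‖ ^ 2 : ℝ) : ℂ)) * E21 τ)) τ ∧
          HasDerivAt E12 (Complex.I * ((0 : ℂ) * E12 τ + ((‖ξ‖ : ℝ) : ℂ) * E22 τ)) τ ∧
          HasDerivAt E22 (Complex.I * (((‖ξ‖ : ℝ) : ℂ) * E12 τ + (Complex.I * ((g τ * ‖ξ‖ ^ 2 : ℝ) : ℂ)) * E22 τ)) τ) →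
        ‖E11 t‖ ≤ C * Real.exp (-(3/8) * ‖ξ‖ ^ 2 * ∫ τ in s..t, g τ) ∧
        ‖E12 t‖ ≤ C * Real.exp (-(3/8) * ‖ξ‖ ^ 2 * ∫ τ in s..t, g τ) ∧
        ‖E21 t‖ ≤ C * Real.exp (-(3/8) * ‖ξ‖ ^ 2 * ∫ τ in s..t, g τ) ∧
        ‖E22 t‖ ≤ C * Real.exp (-(3/8) * ‖ξ‖ ^ 2 * ∫ τ in s..t, g τ) := by
  refine ⟨3, by norm_num, fun ξ s t hs hst hgs E11 E12 E21 E22 h11 h12 h21 h22 hODE => ?_⟩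
  have hIcc : Icc s t ⊆ Ici 0 := fun x hx => hs.trans hx.1
  have hg : ∀ x ∈ Icc s t, HasDerivWithinAt g (g' x) (Icc s t) x :=
    fun x hx => (hg_deriv x (hIcc hx)).mono hIcc
  have hg' : ∀ x ∈ Ioo s t, g' x ≤ 0 := fun x hx => (hB1 x (hIcc (Ioo_subset_Icc_self hx))).2.le
  have hg_nonneg : ∀ x ∈ Icc s t, 0 ≤ g x := fun x hx => (hB1 x (hIcc hx)).1.le
  obtain ⟨h11t, h21t⟩ := norm_le_of_dampedWave_column (norm_nonneg ξ) hst hg hg' hg_nonneg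
    (hgs.trans hε2) (fun τ hτ => (hODE τ hτ.1).1) (fun τ hτ => (hODE τ hτ.1).2.1)
    (by simp [h11, h21])
  obtain ⟨h12t, h22t⟩ := norm_le_of_dampedWave_column (norm_nonneg ξ) hst hg hg' hg_nonneg
    (hgs.trans hε2) (fun τ hτ => (hODE τ hτ.1).2.2.1) (fun τ hτ => (hODE τ hτ.1).2.2.2)
    (by simp [h12, h22])
  exact ⟨h11t, h12t, h21t, h22t⟩

theorem stmt_7
    (n : ℕ)
    (g g' g'' : ℝ → ℝ)
    (hg_deriv : ∀ t ∈ Ici (0:ℝ), HasDerivWithinAt g (g' t) (Ici 0) t)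
    (hg_deriv' : ∀ t ∈ Ici (0:ℝ), HasDerivWithinAt g' (g'' t) (Ici 0) t)
    (hg_cont : ContinuousOn g'' (Ici 0))
    (hB1 : ∀ t ∈ Ici (0:ℝ), 0 < g t ∧ g' t < 0)
    (hB2 : IntegrableOn g (Ici 0))
    (hB3 : ∃ C₁ > (0:ℝ), ∃ C₂ > (0:ℝ), ∀ t ∈ Ici (0:ℝ),
      |g' t| ≤ C₁ * g t ∧ |g'' t| ≤ C₂ * g t)
    (ε : ℝ) (hε1 : 0 < ε) (hε2 : ε ≤ 1) :
    ∃ C > (0:ℝ),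
      ∀ (ξ : EuclideanSpace ℝ (Fin n)),
      ∀ s t : ℝ, 0 ≤ s → s ≤ t → g s * ‖ξ‖ ≤ ε →
      ∀ E11 E12 E21 E22 : ℝ → ℂ,
        E11 s = 1 → E12 s = 0 → E21 s = 0 → E22 s = 1 →
        (∀ τ ∈ Ici s,
          HasDerivAt E11 (Complex.I * ((0 : ℂ) * E11 τ + ((‖ξ‖ : ℝ) : ℂ) * E21 τ)) τ ∧
          HasDerivAt E21 (Complex.I * (((‖ξ‖ : ℝ) : ℂ) * E11 τ + (Complex.I * ((g τ * ‖ξ‖ ^ 2 : ℝ) : ℂ)) * E21 τ)) τ ∧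
          HasDerivAt E12 (Complex.I * ((0 : ℂ) * E12 τ + ((‖ξ‖ : ℝ) : ℂ) * E22 τ)) τ ∧
          HasDerivAt E22 (Complex.I * (((‖ξ‖ : ℝ) : ℂ) * E12 τ + (Complex.I * ((g τ * ‖ξ‖ ^ 2 : ℝ) : ℂ)) * E22 τ)) τ) →
        ‖E11 t‖ ≤ C * Real.exp (-(3/8) * ‖ξ‖ ^ 2 * ∫ τ in s..t, g τ) ∧
        ‖E12 t‖ ≤ C * Real.exp (-(3/8) * ‖ξ‖ ^ 2 * ∫ τ in s..t, g τ) ∧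
        ‖E21 t‖ ≤ C * Real.exp (-(3/8) * ‖ξ‖ ^ 2 * ∫ τ in s..t, g τ) ∧
        ‖E22 t‖ ≤ C * Real.exp (-(3/8) * ‖ξ‖ ^ 2 * ∫ τ in s..t, g τ) :=
  stmt_7_general n g g' hg_deriv hB1 ε hε2
end

section
/- Assume g ∈ C²([0,∞)) satisfies (D1) g(t)>0, g'(t)≤0 and g''(t)≥0, (D2) g ∉ L¹(0,∞), and (D3) |d_t^k g(t)| ≤ C_k g(t)(1/(1+t))^k for k=1,2. Set h(t) = 1 − g'(t)/2. Then there exists C > 0 such that for every ξ, every C² solution û(·,ξ) of the Fourier-transformed equation, and all s ≤ t such that g(τ)²|ξ|² ≤ 3h(τ) for all τ ∈ [s,t]: for real r ≥ 1, |ξ|^r |û(t,ξ)| ≤ C exp( −(|ξ|²/2)∫_s^t g(τ)dτ )( |ξ|^r|û(s,ξ)| + |ξ|^{r−1}|û_t(s,ξ)| ), and for real r ≥ 0, |ξ|^r |û_t(t,ξ)| ≤ C exp( −(|ξ|²/2)∫_s^t g(τ)dτ )( |ξ|^{r+1}|û(s,ξ)| + |ξ|^{r}|û_t(s,ξ)|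 ). -/
/-!
The Liouville substitution `V = exp((|ξ|²/2) ∫ₛ^τ g) û` removes the damping and turns the equation
into `V'' + m V = 0` with `m = |ξ|² h - g²|ξ|⁴/4`; in the hyperbolic zone `m ≥ |ξ|² h / 4 ≥ |ξ|²/4`.
For the energy `E = m |V|² + |V'|²` one has `E' = m' |V|²`, and since `g'' ≥ 0`, `g' ≤ 0` this is
at most `-2|ξ|² g g' E`, so `E(t) ≤ exp(|ξ|² g(s)²) E(s) ≤ exp(3H) E(s)`, where `H = h(0)`
bounds `h` because `g'` is nondecreasing. Undoing the substitution costs exactly the factor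
`exp(-(|ξ|²/2) ∫ₛᵗ g)`.
-/

open Set MeasureTheory

theorem ContinuousOn.hasDerivWithinAt_integral_Icc {E : Type*} [NormedAddCommGroup E]
    [NormedSpace ℝ E] [CompleteSpace E] {f : ℝ → E} {a b x : ℝ}
    (hf : ContinuousOn f (Icc a b)) (hx : x ∈ Icc a b) :
    HasDerivWithinAt (fun y => ∫ τ in a..y, f τ) (f x) (Icc a b) x := by
  have : Fact (x ∈ Icc a b) := ⟨hx⟩
  exact intervalIntegral.integral_hasDerivWithinAt_right
    ((hf.mono (Icc_subset_Icc_right hx.2)).intervalIntegrable_of_Icc hx.1)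
    (hf.stronglyMeasurableAtFilter_nhdsWithin measurableSet_Icc x) (hf x hx)

theorem monotoneOn_of_forall_hasDerivWithinAt_nonneg {D : Set ℝ} (hD : Convex ℝ D)
    {f f' : ℝ → ℝ} (hf : ∀ x ∈ D, HasDerivWithinAt f (f' x) D x)
    (hf' : ∀ x ∈ interior D, 0 ≤ f' x) : MonotoneOn f D :=
  monotoneOn_of_hasDerivWithinAt_nonneg hD (fun x hx => (hf x hx).continuousWithinAt)
    (fun x hx => (hf x (interior_subset hx)).mono interior_subset) hf'

theorem le_exp_sub_mul_of_hasDerivWithinAt_le_mul {E E' Φ Φ' : ℝ → ℝ} {a b : ℝ} (hab : a ≤ b)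
    (hE : ∀ x ∈ Icc a b, HasDerivWithinAt E (E' x) (Icc a b) x)
    (hΦ : ∀ x ∈ Icc a b, HasDerivWithinAt Φ (Φ' x) (Icc a b) x)
    (hle : ∀ x ∈ Ioo a b, E' x ≤ Φ' x * E x) :
    E b ≤ Real.exp (Φ b - Φ a) * E a := by
  have hmono : MonotoneOn (fun x => -(E x * Real.exp (-Φ x))) (Icc a b) := by
    refine monotoneOn_of_forall_hasDerivWithinAt_nonneg (convex_Icc a b)
      (fun x hx => ((hE x hx).mul (hΦ x hx).neg.exp).neg) fun x hx => ?_
    rw [interior_Icc] at hx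
    simp only [Pi.neg_apply]
    nlinarith [mul_nonneg (sub_nonneg.2 (hle x hx)) (Real.exp_pos (-Φ x)).le]
  have hdecay : E b * Real.exp (-Φ b) ≤ E a * Real.exp (-Φ a) :=
    neg_le_neg_iff.1 (hmono ⟨le_rfl, hab⟩ ⟨hab, le_rfl⟩ hab)
  calc E b = E b * Real.exp (-Φ b) * Real.exp (Φ b) := by
        rw [mul_assoc, ← Real.exp_add, neg_add_cancel, Real.exp_zero, mul_one]
    _ ≤ E a * Real.exp (-Φ a) * Real.exp (Φ b) :=
        mul_le_mul_of_nonneg_right hdecay (Real.exp_pos _).le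
    _ = Real.exp (Φ b - Φ a) * E a := by
        rw [sub_eq_add_neg, Real.exp_add]; ring

theorem hasDerivWithinAt_hill_energy {F : Type*} [NormedAddCommGroup F] [InnerProductSpace ℝ F]
    {V W : ℝ → F} {m : ℝ → ℝ} {m' x : ℝ} {S : Set ℝ}
    (hV : HasDerivWithinAt V (W x) S x) (hW : HasDerivWithinAt W (-m x • V x) S x)
    (hm : HasDerivWithinAt m m' S x) :
    HasDerivWithinAt (fun τ => m τ * ‖V τ‖ ^ 2 + ‖W τ‖ ^ 2) (m' * ‖V x‖ ^ 2) S x := by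
  refine ((hm.mul hV.norm_sq).add hW.norm_sq).congr_deriv ?_
  rw [inner_smul_right, real_inner_comm]
  ring

theorem hill_energy_le {F : Type*} [NormedAddCommGroup F] [InnerProductSpace ℝ F]
    {V W : ℝ → F} {m m' Φ Φ' : ℝ → ℝ} {s t : ℝ} (hst : s ≤ t)
    (hV : ∀ x ∈ Icc s t, HasDerivWithinAt V (W x) (Icc s t) x)
    (hW : ∀ x ∈ Icc s t, HasDerivWithinAt W (-m x • V x) (Icc s t) x)
    (hm : ∀ x ∈ Icc s t, HasDerivWithinAt m (m' x) (Icc s t) x)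
    (hΦ : ∀ x ∈ Icc s t, HasDerivWithinAt Φ (Φ' x) (Icc s t) x)
    (hΦ' : ∀ x ∈ Ioo s t, 0 ≤ Φ' x) (hm' : ∀ x ∈ Ioo s t, m' x ≤ Φ' x * m x) :
    m t * ‖V t‖ ^ 2 + ‖W t‖ ^ 2 ≤ Real.exp (Φ t - Φ s) * (m s * ‖V s‖ ^ 2 + ‖W s‖ ^ 2) :=
  le_exp_sub_mul_of_hasDerivWithinAt_le_mul hst
    (fun x hx => hasDerivWithinAt_hill_energy (hV x hx) (hW x hx) (hm x hx)) hΦ fun x hx => by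
      nlinarith [mul_le_mul_of_nonneg_right (hm' x hx) (sq_nonneg ‖V x‖),
        mul_nonneg (hΦ' x hx) (sq_nonneg ‖W x‖)]

/-- The Liouville substitution `V = e^φ u` with `φ' = a/2` brings `u'' + a u' + b u = 0` to the
normal form `V'' + (b - a'/2 - a²/4) V = 0`. -/
theorem hasDerivWithinAt_liouville {S : Set ℝ} {x : ℝ} {u u' : ℝ → ℂ} {u'' : ℂ}
    {a φ : ℝ → ℝ} {a' b : ℝ}
    (hu : HasDerivWithinAt u (u' x) S x) (hu' : HasDerivWithinAt u' u'' S x)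
    (ha : HasDerivWithinAt a a' S x) (hφ : HasDerivWithinAt φ (a x / 2) S x)
    (heq : u'' + a x * u' x + b * u x = 0) :
    HasDerivWithinAt (fun τ => (Real.exp (φ τ) : ℂ) * u τ)
      (Real.exp (φ x) * (u' x + (a x / 2 : ℝ) * u x)) S x ∧
    HasDerivWithinAt (fun τ => (Real.exp (φ τ) : ℂ) * (u' τ + (a τ / 2 : ℝ) * u τ))
      (-(b - a' / 2 - a x ^ 2 / 4) • ((Real.exp (φ x) : ℂ) * u x)) S x := by
  have hw := hφ.exp.ofReal_comp
  have hB := (ha.div_const 2).ofReal_comp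
  constructor
  · refine (hw.mul hu).congr_deriv ?_
    simp only [Complex.ofReal_mul, Complex.ofReal_div, Complex.ofReal_ofNat]
    ring
  · refine (hw.mul (hu'.add (hB.mul hu))).congr_deriv ?_
    simp only [Complex.real_smul, Pi.add_apply, Pi.mul_apply, Complex.ofReal_mul,
      Complex.ofReal_div, Complex.ofReal_ofNat, Complex.ofReal_sub, Complex.ofReal_neg,
      Complex.ofReal_pow]
    linear_combination (Real.exp (φ x) : ℂ) * heq

namespace DampedWave

variable {g g' g'' : ℝ → ℝ} {u u' u'' : ℝ → ℂ} {k s t H : ℝ}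

/-- `b - a'/2 - a²/4` for `a = g k²`, `b = k²`, i.e. `k² h - g² k⁴ / 4`. -/
noncomputable def potential (g g' : ℝ → ℝ) (k τ : ℝ) : ℝ :=
  k ^ 2 - g' τ * k ^ 2 / 2 - (g τ * k ^ 2) ^ 2 / 4

/-- Multiplied by `exp (k² ∫ₛ^τ g)` this is the energy `m |V|² + |V'|²` of the Liouville
transform `V = exp ((k²/2) ∫ₛ^τ g) u`. -/
noncomputable def energy (g g' : ℝ → ℝ) (u u' : ℝ → ℂ) (k τ : ℝ) : ℝ :=
  potential g g' k τ * ‖u τ‖ ^ 2 + ‖u' τ + (g τ * k ^ 2 / 2 : ℝ) * u τ‖ ^ 2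

theorem potential_ge {τ : ℝ} (hg' : g' τ ≤ 0) (hzone : g τ ^ 2 * k ^ 2 ≤ 3 * (1 - g' τ / 2)) :
    k ^ 2 / 4 ≤ potential g g' k τ := by
  unfold potential
  nlinarith [mul_le_mul_of_nonneg_right hzone (sq_nonneg k),
    mul_nonneg (sq_nonneg k) (neg_nonneg.2 hg')]

theorem energy_le_of_zone {τ : ℝ} (hk : 0 ≤ k) (hg : 0 ≤ g τ) (hg' : g' τ ≤ 0)
    (hzone : g τ ^ 2 * k ^ 2 ≤ 3 * (1 - g' τ / 2)) (hH : 1 - g' τ / 2 ≤ H) :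
    energy g g' u u' k τ ≤ 3 * H * (k * ‖u τ‖ + ‖u' τ‖) ^ 2 := by
  have hH1 : 1 ≤ H := by linarith
  have hpot : potential g g' k τ ≤ H * k ^ 2 := by
    unfold potential
    nlinarith [mul_le_mul_of_nonneg_right hH (sq_nonneg k), sq_nonneg (g τ * k ^ 2)]
  have hB : (g τ * k ^ 2 / 2) ^ 2 ≤ 3 * H / 4 * k ^ 2 := by
    nlinarith [mul_le_mul_of_nonneg_right hzone (sq_nonneg k),
      mul_le_mul_of_nonneg_right hH (sq_nonneg k)]
  have hshift : ‖u' τ + (g τ * k ^ 2 / 2 : ℝ) * u τ‖ ≤ ‖u' τ‖ + g τ * k ^ 2 / 2 * ‖u τ‖ := by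
    refine (norm_add_le _ _).trans_eq ?_
    rw [norm_mul, Complex.norm_of_nonneg (by positivity)]
  have hshift_sq : ‖u' τ + (g τ * k ^ 2 / 2 : ℝ) * u τ‖ ^ 2 ≤
      2 * ‖u' τ‖ ^ 2 + 3 * H / 2 * (k * ‖u τ‖) ^ 2 := by
    nlinarith [pow_le_pow_left₀ (norm_nonneg _) hshift 2,
      sq_nonneg (‖u' τ‖ - g τ * k ^ 2 / 2 * ‖u τ‖),
      mul_le_mul_of_nonneg_right hB (sq_nonneg ‖u τ‖)]
  have hcross : 0 ≤ H * (k * ‖u τ‖ * ‖u' τ‖) := by positivity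
  unfold energy
  nlinarith [mul_le_mul_of_nonneg_right hpot (sq_nonneg ‖u τ‖),
    mul_le_mul_of_nonneg_right hH1 (sq_nonneg ‖u' τ‖), sq_nonneg (k * ‖u τ‖)]

theorem energy_le (hst : s ≤ t)
    (hg : ∀ x ∈ Icc s t, HasDerivWithinAt g (g' x) (Icc s t) x)
    (hg' : ∀ x ∈ Icc s t, HasDerivWithinAt g' (g'' x) (Icc s t) x)
    (hu : ∀ x ∈ Icc s t, HasDerivWithinAt u (u' x) (Icc s t) x)
    (hu' : ∀ x ∈ Icc s t, HasDerivWithinAt u' (u'' x) (Icc s t) x)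
    (heq : ∀ x ∈ Icc s t, u'' x + (k : ℂ) ^ 2 * u x + (g x : ℂ) * (k : ℂ) ^ 2 * u' x = 0)
    (hg_nonneg : ∀ x ∈ Ioo s t, 0 ≤ g x) (hg'_nonpos : ∀ x ∈ Ioo s t, g' x ≤ 0)
    (hg''_nonneg : ∀ x ∈ Ioo s t, 0 ≤ g'' x)
    (hzone : ∀ x ∈ Ioo s t, g x ^ 2 * k ^ 2 ≤ 3 * (1 - g' x / 2)) :
    Real.exp (k ^ 2 * ∫ τ in s..t, g τ) * energy g g' u u' k t ≤
      Real.exp (k ^ 2 * (g s ^ 2 - g t ^ 2)) * energy g g' u u' k s := by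
  set φ : ℝ → ℝ := fun τ => k ^ 2 / 2 * ∫ y in s..τ, g y with hφ_def
  have hgc : ContinuousOn g (Icc s t) := fun x hx => (hg x hx).continuousWithinAt
  have hφ : ∀ x ∈ Icc s t, HasDerivWithinAt φ (g x * k ^ 2 / 2) (Icc s t) x := fun x hx =>
    ((hgc.hasDerivWithinAt_integral_Icc hx).const_mul (k ^ 2 / 2)).congr_deriv (by ring)
  have hliouville (x : ℝ) (hx : x ∈ Icc s t) :=
    hasDerivWithinAt_liouville (a := fun τ => g τ * k ^ 2) (b := k ^ 2) (hu x hx) (hu' x hx)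
      ((hg x hx).mul_const _) (hφ x hx) (by push_cast; linear_combination heq x hx)
  have hpot : ∀ x ∈ Icc s t, HasDerivWithinAt (potential g g' k)
      (-(g'' x * k ^ 2 / 2) - g x * g' x * k ^ 4 / 2) (Icc s t) x := fun x hx =>
    ((((hg' x hx).mul_const (k ^ 2)).div_const 2).const_sub (k ^ 2) |>.sub
      ((((hg x hx).mul_const (k ^ 2)).pow 2).div_const 4)).congr_deriv (by ring)
  have hΦ : ∀ x ∈ Icc s t, HasDerivWithinAt (fun τ => -(k ^ 2 * g τ ^ 2))
      (-(2 * k ^ 2 * g x * g' x)) (Icc s t) x := fun x hx =>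
    (((hg x hx).pow 2).const_mul (k ^ 2)).neg.congr_deriv (by ring)
  have hΦ' : ∀ x ∈ Ioo s t, 0 ≤ -(2 * k ^ 2 * g x * g' x) := fun x hx => by
    nlinarith [mul_nonneg (hg_nonneg x hx) (neg_nonneg.2 (hg'_nonpos x hx)), sq_nonneg k]
  have hpot' : ∀ x ∈ Ioo s t, -(g'' x * k ^ 2 / 2) - g x * g' x * k ^ 4 / 2 ≤
      -(2 * k ^ 2 * g x * g' x) * potential g g' k x := fun x hx => by
    nlinarith [potential_ge (hg'_nonpos x hx) (hzone x hx), hg''_nonneg x hx, sq_nonneg k,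
      hΦ' x hx]
  have key := hill_energy_le (m := potential g g' k) hst (fun x hx => (hliouville x hx).1)
    (fun x hx => (hliouville x hx).2) hpot hΦ hΦ' hpot'
  have hsq (r : ℝ) (z : ℂ) : ‖(Real.exp r : ℂ) * z‖ ^ 2 = Real.exp (2 * r) * ‖z‖ ^ 2 := by
    rw [norm_mul, Complex.norm_of_nonneg (Real.exp_pos r).le, mul_pow, ← Real.exp_nat_mul]
    norm_num
  have hφs : φ s = 0 := by simp [hφ_def]
  have hφt : 2 * φ t = k ^ 2 * ∫ τ in s..t, g τ := by simp only [hφ_def]; ring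
  simp only [hsq, hφs, hφt, Real.exp_zero, Complex.ofReal_one, one_mul] at key
  rw [neg_sub_neg, ← mul_sub] at key
  calc _ = _ := by unfold energy; ring
    _ ≤ _ := key

theorem norm_le_of_energy_le {τ w L A : ℝ} (hk : 0 ≤ k) (hw : 0 ≤ w) (hL : 0 ≤ L) (hA : 0 ≤ A)
    (hg : 0 ≤ g τ) (hg' : g' τ ≤ 0) (hzone : g τ ^ 2 * k ^ 2 ≤ 3 * (1 - g' τ / 2))
    (hgk : g τ * k ≤ L) (hE : w ^ 2 * energy g g' u u' k τ ≤ (L * A) ^ 2) :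
    w * (k * ‖u τ‖) ≤ 2 * L * A ∧ w * ‖u' τ‖ ≤ L * (L + 1) * A := by
  set v := u' τ + (g τ * k ^ 2 / 2 : ℝ) * u τ with hv
  have hpot := potential_ge hg' hzone
  have hu_sq : (w * (k * ‖u τ‖)) ^ 2 ≤ (2 * L * A) ^ 2 := by
    unfold energy at hE
    nlinarith [mul_le_mul_of_nonneg_left (mul_le_mul_of_nonneg_right hpot (sq_nonneg ‖u τ‖))
      (sq_nonneg w), sq_nonneg (w * ‖v‖)]
  have hv_sq : (w * ‖v‖) ^ 2 ≤ (L * A) ^ 2 := by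
    unfold energy at hE
    nlinarith [mul_nonneg (sq_nonneg w) (mul_nonneg ((by positivity : (0:ℝ) ≤ k ^ 2 / 4).trans hpot)
      (sq_nonneg ‖u τ‖))]
  have hu_le := le_of_pow_le_pow_left₀ two_ne_zero (by positivity) hu_sq
  have hv_le := le_of_pow_le_pow_left₀ two_ne_zero (by positivity) hv_sq
  have hu' : ‖u' τ‖ ≤ ‖v‖ + g τ * k / 2 * (k * ‖u τ‖) :=
    calc ‖u' τ‖ = ‖v - (g τ * k ^ 2 / 2 : ℝ) * u τ‖ := by rw [hv, add_sub_cancel_right]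
      _ ≤ ‖v‖ + ‖((g τ * k ^ 2 / 2 : ℝ) : ℂ) * u τ‖ := norm_sub_le _ _
      _ = ‖v‖ + g τ * k / 2 * (k * ‖u τ‖) := by
        rw [norm_mul, Complex.norm_of_nonneg (by positivity)]; ring
  refine ⟨hu_le, ?_⟩
  calc w * ‖u' τ‖ ≤ w * ‖v‖ + g τ * k / 2 * (w * (k * ‖u τ‖)) := by
        nlinarith [mul_le_mul_of_nonneg_left hu' hw]
    _ ≤ L * A + L / 2 * (2 * L * A) := by
        gcongr
    _ = L * (L + 1) * A := by ring

/-- Chosen so that `L² ≥ 3H e^{3H}` and `L ≥ 2H`. -/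
noncomputable def zoneConstant (H : ℝ) : ℝ := 2 * H * Real.exp (3 * H / 2)

theorem hyperbolic_estimate (hst : s ≤ t) (hk : 0 ≤ k)
    (hg : ∀ x ∈ Icc s t, HasDerivWithinAt g (g' x) (Icc s t) x)
    (hg' : ∀ x ∈ Icc s t, HasDerivWithinAt g' (g'' x) (Icc s t) x)
    (hu : ∀ x ∈ Icc s t, HasDerivWithinAt u (u' x) (Icc s t) x)
    (hu' : ∀ x ∈ Icc s t, HasDerivWithinAt u' (u'' x) (Icc s t) x)
    (heq : ∀ x ∈ Icc s t, u'' x + (k : ℂ) ^ 2 * u x + (g x : ℂ) * (k : ℂ) ^ 2 * u' x = 0)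
    (hg_nonneg : ∀ x ∈ Icc s t, 0 ≤ g x) (hg'_nonpos : ∀ x ∈ Icc s t, g' x ≤ 0)
    (hg''_nonneg : ∀ x ∈ Icc s t, 0 ≤ g'' x)
    (hzone : ∀ x ∈ Icc s t, g x ^ 2 * k ^ 2 ≤ 3 * (1 - g' x / 2))
    (hH : ∀ x ∈ Icc s t, 1 - g' x / 2 ≤ H) :
    k * ‖u t‖ ≤ zoneConstant H * (zoneConstant H + 2) *
        Real.exp (-(k ^ 2 / 2) * ∫ τ in s..t, g τ) * (k * ‖u s‖ + ‖u' s‖) ∧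
      ‖u' t‖ ≤ zoneConstant H * (zoneConstant H + 2) *
        Real.exp (-(k ^ 2 / 2) * ∫ τ in s..t, g τ) * (k * ‖u s‖ + ‖u' s‖) := by
  have hs : s ∈ Icc s t := ⟨le_rfl, hst⟩
  have ht : t ∈ Icc s t := ⟨hst, le_rfl⟩
  have hH1 : 1 ≤ H := by linarith [hg'_nonpos s hs, hH s hs]
  set L := zoneConstant H with hL_def
  set A := k * ‖u s‖ + ‖u' s‖
  set w := Real.exp (k ^ 2 / 2 * ∫ τ in s..t, g τ)
  have hA : 0 ≤ A := by positivity
  have hw : 0 < w := Real.exp_pos _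
  have h2H : 2 * H ≤ L := le_mul_of_one_le_right (by linarith) (Real.one_le_exp (by linarith))
  have hgrowth : k ^ 2 * (g s ^ 2 - g t ^ 2) ≤ 3 * H := by
    nlinarith [hzone s hs, hH s hs, sq_nonneg (g t * k)]
  have hw2 : w ^ 2 = Real.exp (k ^ 2 * ∫ τ in s..t, g τ) := by
    rw [← Real.exp_nat_mul]; ring_nf
  have hL2 : L ^ 2 = 4 * H ^ 2 * Real.exp (3 * H) := by
    rw [hL_def, zoneConstant, mul_pow, mul_pow, ← Real.exp_nat_mul]; ring_nf
  have hwE : w ^ 2 * energy g g' u u' k t ≤ (L * A) ^ 2 :=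
    calc w ^ 2 * energy g g' u u' k t
        ≤ Real.exp (k ^ 2 * (g s ^ 2 - g t ^ 2)) * energy g g' u u' k s := by
          rw [hw2]
          exact energy_le hst hg hg' hu hu' heq (fun x hx => hg_nonneg x (Ioo_subset_Icc_self hx))
            (fun x hx => hg'_nonpos x (Ioo_subset_Icc_self hx))
            (fun x hx => hg''_nonneg x (Ioo_subset_Icc_self hx))
            (fun x hx => hzone x (Ioo_subset_Icc_self hx))
      _ ≤ Real.exp (k ^ 2 * (g s ^ 2 - g t ^ 2)) * (3 * H * A ^ 2) := by
          gcongr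
          exact energy_le_of_zone hk (hg_nonneg s hs) (hg'_nonpos s hs) (hzone s hs) (hH s hs)
      _ ≤ Real.exp (3 * H) * (3 * H * A ^ 2) := by gcongr
      _ ≤ (L * A) ^ 2 := by
          rw [mul_pow, hL2]
          nlinarith [mul_nonneg (by nlinarith : (0:ℝ) ≤ 4 * H ^ 2 - 3 * H)
            (mul_nonneg (Real.exp_pos (3 * H)).le (sq_nonneg A))]
  have hgk : g t * k ≤ L := by
    refine le_trans (le_of_pow_le_pow_left₀ two_ne_zero (by linarith) ?_) h2H
    nlinarith [hzone t ht, hH t ht]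
  obtain ⟨hut, hu't⟩ := norm_le_of_energy_le hk hw.le (by linarith) hA (hg_nonneg t ht)
    (hg'_nonpos t ht) (hzone t ht) hgk hwE
  have hscale {X : ℝ} (hX : w * X ≤ L * (L + 2) * A) : X ≤ L * (L + 2) * w⁻¹ * A := by
    rw [mul_right_comm, ← div_eq_mul_inv, le_div_iff₀ hw]
    linarith
  rw [neg_mul, Real.exp_neg]
  exact ⟨hscale (by nlinarith [mul_nonneg (sq_nonneg L) hA]),
    hscale (by nlinarith [mul_nonneg (by linarith : (0:ℝ) ≤ L) hA])⟩

end DampedWave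

theorem rpow_mul_le_of_le_mul_add {k x y z K r : ℝ} (hk : 0 ≤ k) (hr : r + 1 ≠ 0)
    (h : x ≤ K * (k * y + z)) : k ^ r * x ≤ K * (k ^ (r + 1) * y + k ^ r * z) := by
  rw [Real.rpow_add_one' hk hr]
  calc k ^ r * x ≤ k ^ r * (K * (k * y + z)) := mul_le_mul_of_nonneg_left h (Real.rpow_nonneg hk r)
    _ = K * (k ^ r * k * y + k ^ r * z) := by ring

theorem stmt_13_general
    (n : ℕ)
    (g g' g'' : ℝ → ℝ)
    (hg_deriv : ∀ t ∈ Ici (0:ℝ), HasDerivWithinAt g (g' t) (Ici 0) t)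
    (hg_deriv' : ∀ t ∈ Ici (0:ℝ), HasDerivWithinAt g' (g'' t) (Ici 0) t)
    (hD1 : ∀ t ∈ Ici (0:ℝ), 0 < g t ∧ g' t ≤ 0 ∧ 0 ≤ g'' t)
    :
    ∃ C > (0:ℝ),
      ∀ (ξ : EuclideanSpace ℝ (Fin n)),
      ∀ (u u' u'' : ℝ → ℂ),
      (∀ t ∈ Ici (0:ℝ), HasDerivWithinAt u (u' t) (Ici 0) t) →
      (∀ t ∈ Ici (0:ℝ), HasDerivWithinAt u' (u'' t) (Ici 0) t) →
      ContinuousOn u'' (Ici 0) →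
      (∀ t ∈ Ici (0:ℝ),
        u'' t + (‖ξ‖ : ℂ) ^ 2 * u t + (g t : ℂ) * (‖ξ‖ : ℂ) ^ 2 * u' t = 0) →
      ∀ s t : ℝ, 0 ≤ s → s ≤ t →
        (∀ τ ∈ Icc s t, g τ ^ 2 * ‖ξ‖ ^ 2 ≤ 3 * (1 - g' τ / 2)) →
        (∀ r : ℝ, 1 ≤ r →
          ‖ξ‖ ^ r * ‖u t‖ ≤
            C * Real.exp ((-(‖ξ‖ ^ 2 / 2)) * ∫ τ in s..t, g τ) *
              (‖ξ‖ ^ r * ‖u s‖ + ‖ξ‖ ^ (r - 1) * ‖u' s‖)) ∧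
        (∀ r : ℝ, 0 ≤ r →
          ‖ξ‖ ^ r * ‖u' t‖ ≤
            C * Real.exp ((-(‖ξ‖ ^ 2 / 2)) * ∫ τ in s..t, g τ) *
              (‖ξ‖ ^ (r + 1) * ‖u s‖ + ‖ξ‖ ^ r * ‖u' s‖)) := by
  have hg'_mono : MonotoneOn g' (Ici 0) :=
    monotoneOn_of_forall_hasDerivWithinAt_nonneg (convex_Ici 0) hg_deriv'
      fun x hx => (hD1 x (interior_subset hx)).2.2
  set L := DampedWave.zoneConstant (1 - g' 0 / 2)
  have hL : 0 < L := by
    have hH : 0 < 1 - g' 0 / 2 := by linarith [(hD1 0 self_mem_Ici).2.1]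
    unfold L DampedWave.zoneConstant
    positivity
  refine ⟨L * (L + 2), by positivity, fun ξ u u' u'' hu hu' _ heq s t hs hst hzone => ?_⟩
  have hsub : Icc s t ⊆ Ici 0 := fun x hx => hs.trans hx.1
  obtain ⟨hut, hu't⟩ := DampedWave.hyperbolic_estimate (H := 1 - g' 0 / 2) hst (norm_nonneg ξ)
    (fun x hx => (hg_deriv x (hsub hx)).mono hsub) (fun x hx => (hg_deriv' x (hsub hx)).mono hsub)
    (fun x hx => (hu x (hsub hx)).mono hsub) (fun x hx => (hu' x (hsub hx)).mono hsub)
    (fun x hx => heq x (hsub hx)) (fun x hx => (hD1 x (hsub hx)).1.le)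
    (fun x hx => (hD1 x (hsub hx)).2.1) (fun x hx => (hD1 x (hsub hx)).2.2) hzone
    (fun x hx => by linarith [hg'_mono self_mem_Ici (hsub hx) (hsub hx)])
  refine ⟨fun r hr => ?_, fun r hr => rpow_mul_le_of_le_mul_add (norm_nonneg ξ) (by linarith) hu't⟩
  have h := rpow_mul_le_of_le_mul_add (r := r - 1) (norm_nonneg ξ) (by linarith) hut
  rwa [sub_add_cancel, ← mul_assoc, ← Real.rpow_add_one' (norm_nonneg ξ) (by linarith),
    sub_add_cancel] at h

theorem stmt_13
    (n : ℕ)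
    (g g' g'' : ℝ → ℝ)
    (hg_deriv : ∀ t ∈ Ici (0:ℝ), HasDerivWithinAt g (g' t) (Ici 0) t)
    (hg_deriv' : ∀ t ∈ Ici (0:ℝ), HasDerivWithinAt g' (g'' t) (Ici 0) t)
    (hg_cont : ContinuousOn g'' (Ici 0))
    (hD1 : ∀ t ∈ Ici (0:ℝ), 0 < g t ∧ g' t ≤ 0 ∧ 0 ≤ g'' t)
    (hD2 : ¬ IntegrableOn g (Ici 0))
    (hD3 : ∃ C₁ > (0:ℝ), ∃ C₂ > (0:ℝ), ∀ t ∈ Ici (0:ℝ),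
      |g' t| ≤ C₁ * g t * (1 / (1 + t)) ∧ |g'' t| ≤ C₂ * g t * (1 / (1 + t)) ^ 2)
    :
    ∃ C > (0:ℝ),
      ∀ (ξ : EuclideanSpace ℝ (Fin n)),
      ∀ (u u' u'' : ℝ → ℂ),
      (∀ t ∈ Ici (0:ℝ), HasDerivWithinAt u (u' t) (Ici 0) t) →
      (∀ t ∈ Ici (0:ℝ), HasDerivWithinAt u' (u'' t) (Ici 0) t) →
      ContinuousOn u'' (Ici 0) →
      (∀ t ∈ Ici (0:ℝ),
        u'' t + (‖ξ‖ : ℂ) ^ 2 * u t + (g t : ℂ) * (‖ξ‖ : ℂ) ^ 2 * u' t = 0) →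
      ∀ s t : ℝ, 0 ≤ s → s ≤ t →
        (∀ τ ∈ Icc s t, g τ ^ 2 * ‖ξ‖ ^ 2 ≤ 3 * (1 - g' τ / 2)) →
        (∀ r : ℝ, 1 ≤ r →
          ‖ξ‖ ^ r * ‖u t‖ ≤
            C * Real.exp ((-(‖ξ‖ ^ 2 / 2)) * ∫ τ in s..t, g τ) *
              (‖ξ‖ ^ r * ‖u s‖ + ‖ξ‖ ^ (r - 1) * ‖u' s‖)) ∧
        (∀ r : ℝ, 0 ≤ r →
          ‖ξ‖ ^ r * ‖u' t‖ ≤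
            C * Real.exp ((-(‖ξ‖ ^ 2 / 2)) * ∫ τ in s..t, g τ) *
              (‖ξ‖ ^ (r + 1) * ‖u s‖ + ‖ξ‖ ^ r * ‖u' s‖)) :=
  stmt_13_general n g g' g'' hg_deriv hg_deriv' hD1
end

section
/- Assume g ∈ C²([0,∞)) satisfies (D1) g(t)>0, g'(t)≤0 and g''(t)≥0, (D2) g ∉ L¹(0,∞), and (D3) |d_t^k g(t)| ≤ C_k g(t)(1/(1+t))^k for k=1,2. Set h(t) = 1 − g'(t)/2. Then there exists C > 0 such that for every ξ, every C² solution û(·,ξ) of the Fourier-transformed equation, and all s ≤ t such that 3h(τ) ≤ g(τ)²|ξ|² ≤ 5h(τ) for all τ ∈ [s,t]: for real r ≥ 1, |ξ|^r |û(t,ξ)| ≤ C exp( −(|ξ|²/6)∫_s^t g(τ)dτ )( |ξ|^r|û(s,ξ)| + |ξ|^{r−1}|û_t(s,ξ)| ), and for real r ≥ 0, |ξ|^r |û_t(t,ξ)| ≤ C exp( −(|ξ|²/6)∫_s^t g(τ)dτ )( |ξ|^{r+1}|û(s,ξ)| + |ξ|^{r}|û_t(s,ξ)| ). -/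
/-!
With `w = û_t + (g|ξ|²/2) û` and `h = 1 - g'/2`, the energy `ψ = |w|² + h|ξ|²/4 · |û|²` satisfies
`ψ' ≤ -(|ξ|²/3) g ψ` as long as `3h ≤ g²|ξ|² ≤ 5h`: after substituting the equation the only
indefinite term is a cross term `⟪w, û⟫`, whose coefficient is at most `h` and which AM–GM absorbs
thanks to the lower bound `g²|ξ|² ≥ 3h`; the term `-g''|û|²` has the right sign because `g'' ≥ 0`.
Gronwall then gives `ψ(t) ≤ ψ(s) exp(-(|ξ|²/3)∫ₛᵗ g)`. Both `|ξ||û|` and `|û_t|` are comparable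
to `√ψ` in the zone, with constants depending only on an upper bound for `h`, and `h ≤ h(0)`
because `g'` is nondecreasing.
-/

open Set MeasureTheory
open scoped RealInnerProductSpace

theorem cross_term_le_of_reduced_zone {G H k X Y P : ℝ} (hG : 0 ≤ G) (hH : 0 ≤ H)
    (h3 : 3 * H ≤ G ^ 2 * k ^ 2) (h5 : G ^ 2 * k ^ 2 ≤ 5 * H)
    (hX : 0 ≤ X) (hY : 0 ≤ Y) (hP : P ^ 2 ≤ X * Y) :
    (G ^ 2 * k ^ 2 - 3 * H) / 2 * P ≤ 2 / 3 * G * Y + G * H * k ^ 2 / 6 * X := by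
  have hAM : (H * P) ^ 2 ≤ (2 / 3 * G * Y + G * H * k ^ 2 / 6 * X) ^ 2 := by
    nlinarith [sq_nonneg (2 / 3 * G * Y - G * H * k ^ 2 / 6 * X),
      mul_le_mul_of_nonneg_left hP (sq_nonneg H),
      mul_le_mul_of_nonneg_right h3 (mul_nonneg (mul_nonneg hH hX) hY)]
  calc (G ^ 2 * k ^ 2 - 3 * H) / 2 * P ≤ (G ^ 2 * k ^ 2 - 3 * H) / 2 * |P| :=
        mul_le_mul_of_nonneg_left (le_abs_self P) (by linarith)
    _ ≤ H * |P| := mul_le_mul_of_nonneg_right (by linarith) (abs_nonneg P)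
    _ = |H * P| := by rw [abs_mul, abs_of_nonneg hH]
    _ ≤ _ := abs_le_of_sq_le_sq hAM (by positivity)

variable {E : Type*} [NormedAddCommGroup E] [InnerProductSpace ℝ E]

/-- `G`, `G'` stand for `g(τ)`, `g'(τ)` (so `1 - G' / 2` is `h(τ)`), and `u`, `v` for `û(τ)`,
`û_t(τ)`. -/
noncomputable def energy (k G G' : ℝ) (u v : E) : ℝ :=
  ‖v + (G * k ^ 2 / 2) • u‖ ^ 2 + (1 - G' / 2) * k ^ 2 / 4 * ‖u‖ ^ 2

theorem energy_deriv_le {k G G' G'' : ℝ} {u v a : E} (hG : 0 ≤ G) (hG'' : 0 ≤ G'')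
    (h3 : 3 * (1 - G' / 2) ≤ G ^ 2 * k ^ 2) (h5 : G ^ 2 * k ^ 2 ≤ 5 * (1 - G' / 2))
    (hode : a + k ^ 2 • u + (G * k ^ 2) • v = 0) :
    2 * ⟪v + (G * k ^ 2 / 2) • u, a + ((G * k ^ 2 / 2) • v + (G' * k ^ 2 / 2) • u)⟫
        - G'' / 2 * k ^ 2 / 4 * ‖u‖ ^ 2 + (1 - G' / 2) * k ^ 2 / 4 * (2 * ⟪u, v⟫)
      ≤ -(k ^ 2 / 3 * G) * energy k G G' u v := by
  rw [add_assoc] at hode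
  obtain rfl := eq_neg_of_add_eq_zero_left hode
  obtain ⟨w, rfl⟩ : ∃ w, v = w - (G * k ^ 2 / 2) • u := ⟨v + (G * k ^ 2 / 2) • u, by simp⟩
  have hCS : ⟪u, w⟫ ^ 2 ≤ ‖u‖ ^ 2 * ‖w‖ ^ 2 := by
    rw [← mul_pow, ← sq_abs]
    exact pow_le_pow_left₀ (abs_nonneg _) (abs_real_inner_le_norm u w) 2
  have key := cross_term_le_of_reduced_zone hG (by nlinarith [sq_nonneg (G * k)]) h3 h5
    (sq_nonneg ‖u‖) (sq_nonneg ‖w‖) hCS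
  simp only [energy, sub_add_cancel, inner_add_right, inner_sub_right, inner_neg_right,
    inner_smul_right, real_inner_self_eq_norm_sq, real_inner_comm u w]
  linear_combination k ^ 2 * key + mul_nonneg (mul_nonneg hG'' (sq_nonneg ‖u‖)) (sq_nonneg k) / 8

theorem HasDerivWithinAt.energy {u v : ℝ → E} {G G₁ : ℝ → ℝ} {u' v' : E} {G' G₁' : ℝ}
    {S : Set ℝ} {τ : ℝ} (k : ℝ) (hu : HasDerivWithinAt u u' S τ) (hv : HasDerivWithinAt v v' S τ)
    (hG : HasDerivWithinAt G G' S τ) (hG₁ : HasDerivWithinAt G₁ G₁' S τ) :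
    HasDerivWithinAt (fun x => energy k (G x) (G₁ x) (u x) (v x))
      (2 * ⟪v τ + (G τ * k ^ 2 / 2) • u τ, v' + ((G τ * k ^ 2 / 2) • u' + (G' * k ^ 2 / 2) • u τ)⟫
        - G₁' / 2 * k ^ 2 / 4 * ‖u τ‖ ^ 2 + (1 - G₁ τ / 2) * k ^ 2 / 4 * (2 * ⟪u τ, u'⟫)) S τ := by
  have hw := hv.add (((hG.mul_const (k ^ 2)).div_const 2).smul hu)
  have hH := ((((hG₁.div_const 2).const_sub 1).mul_const (k ^ 2)).div_const 4).mul hu.norm_sq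
  refine (hw.norm_sq.add hH).congr_deriv ?_
  simp only [Pi.add_apply, Pi.smul_apply']
  ring

theorem le_mul_exp_neg_integral_of_hasDerivAt {f f' a : ℝ → ℝ} {s t : ℝ} (hst : s ≤ t)
    (hf : ContinuousOn f (Icc s t)) (ha : ContinuousOn a (Icc s t))
    (hf' : ∀ x ∈ Ioo s t, HasDerivAt f (f' x) x) (hle : ∀ x ∈ Ioo s t, f' x ≤ -a x * f x) :
    f t ≤ f s * Real.exp (-∫ x in s..t, a x) := by
  set A : ℝ → ℝ := fun x => ∫ y in s..x, a y
  have hAc : ContinuousOn A (Icc s t) := by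
    simpa only [uIcc_of_le hst] using intervalIntegral.continuousOn_primitive_interval
      (ha.integrableOn_compact isCompact_Icc |>.mono_set (uIcc_of_le hst).subset)
  have hA : ∀ x ∈ Ioo s t, HasDerivAt A (a x) x := fun x hx =>
    intervalIntegral.integral_hasDerivAt_right
      ((ha.mono (Icc_subset_Icc le_rfl hx.2.le)).intervalIntegrable_of_Icc hx.1.le)
      ((ha.mono Ioo_subset_Icc_self).stronglyMeasurableAtFilter isOpen_Ioo x hx)
      ((ha.mono Ioo_subset_Icc_self).continuousAt (isOpen_Ioo.mem_nhds hx))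
  have hanti : AntitoneOn (fun x => f x * Real.exp (A x)) (Icc s t) := by
    refine antitoneOn_of_hasDerivWithinAt_nonpos (convex_Icc s t) (hf.mul hAc.rexp)
      (f' := fun x => f' x * Real.exp (A x) + f x * (Real.exp (A x) * a x))
      (fun x hx => ?_) (fun x hx => ?_)
    · rw [interior_Icc] at hx ⊢
      exact ((hf' x hx).mul (hA x hx).exp).hasDerivWithinAt
    · rw [interior_Icc] at hx
      nlinarith [hle x hx, Real.exp_pos (A x)]
  have := hanti (left_mem_Icc.2 hst) (right_mem_Icc.2 hst) hst
  simp only [A, intervalIntegral.integral_same, Real.exp_zero, mul_one] at this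
  rw [Real.exp_neg, ← div_eq_mul_inv, le_div_iff₀ (Real.exp_pos _)]
  exact this

theorem energy_le {k G G' H₀ : ℝ} {u v : E} (hk : 0 ≤ k) (hG : 0 ≤ G)
    (h5 : G ^ 2 * k ^ 2 ≤ 5 * (1 - G' / 2)) (hH₀ : 1 - G' / 2 ≤ H₀) (one_le_H₀ : 1 ≤ H₀) :
    energy k G G' u v ≤ 3 * H₀ * (k * ‖u‖ + ‖v‖) ^ 2 := by
  have hw : ‖v + (G * k ^ 2 / 2) • u‖ ≤ ‖v‖ + G * k / 2 * (k * ‖u‖) := by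
    refine (norm_add_le _ _).trans (le_of_eq ?_)
    rw [norm_smul, Real.norm_of_nonneg (by positivity)]
    ring
  have hGk : (G * k / 2 * (k * ‖u‖)) ^ 2 ≤ 5 / 4 * (1 - G' / 2) * (k * ‖u‖) ^ 2 := by
    nlinarith [mul_le_mul_of_nonneg_right h5 (sq_nonneg (k * ‖u‖))]
  calc energy k G G' u v
      ≤ (‖v‖ + G * k / 2 * (k * ‖u‖)) ^ 2 + (1 - G' / 2) / 4 * (k * ‖u‖) ^ 2 := by
        unfold energy
        nlinarith [pow_le_pow_left₀ (norm_nonneg _) hw 2]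
    _ ≤ 2 * ‖v‖ ^ 2 + 11 / 4 * H₀ * (k * ‖u‖) ^ 2 := by
        nlinarith [sq_nonneg (‖v‖ - G * k / 2 * (k * ‖u‖)),
          mul_le_mul_of_nonneg_right hH₀ (sq_nonneg (k * ‖u‖))]
    _ ≤ 3 * H₀ * (k * ‖u‖ + ‖v‖) ^ 2 := by
        nlinarith [mul_nonneg (mul_nonneg (mul_nonneg hk (norm_nonneg u)) (norm_nonneg v))
          (zero_le_one.trans one_le_H₀), mul_le_mul_of_nonneg_right one_le_H₀ (sq_nonneg ‖v‖),
          sq_nonneg (k * ‖u‖)]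

theorem energy_nonneg {k G G' : ℝ} {u v : E} (hH : 0 ≤ 1 - G' / 2) : 0 ≤ energy k G G' u v := by
  unfold energy; positivity

theorem sq_mul_norm_le_energy {k G G' : ℝ} {u v : E} (hH : 1 ≤ 1 - G' / 2) :
    (k * ‖u‖) ^ 2 ≤ 4 * energy k G G' u v := by
  unfold energy
  nlinarith [mul_le_mul_of_nonneg_right hH (sq_nonneg (k * ‖u‖)),
    sq_nonneg ‖v + (G * k ^ 2 / 2) • u‖]

theorem sq_norm_le_energy {k G G' : ℝ} {u v : E} (hG : 0 ≤ G)
    (h5 : G ^ 2 * k ^ 2 ≤ 5 * (1 - G' / 2)) :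
    ‖v‖ ^ 2 ≤ 10 * energy k G G' u v := by
  have hv : ‖v‖ ≤ ‖v + (G * k ^ 2 / 2) • u‖ + G * k ^ 2 / 2 * ‖u‖ := by
    calc ‖v‖ = ‖v + (G * k ^ 2 / 2) • u - (G * k ^ 2 / 2) • u‖ := by rw [add_sub_cancel_right]
      _ ≤ _ := norm_sub_le _ _
      _ = _ := by rw [norm_smul, Real.norm_of_nonneg (by positivity)]
  have hv2 := pow_le_pow_left₀ (norm_nonneg _) hv 2
  unfold energy
  nlinarith [sq_nonneg (‖v + (G * k ^ 2 / 2) • u‖ - G * k ^ 2 / 2 * ‖u‖),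
    mul_le_mul_of_nonneg_right h5 (sq_nonneg (k * ‖u‖))]

theorem norm_le_of_energy_le {k G G' M : ℝ} {u v : E} (hG : 0 ≤ G) (hH : 1 ≤ 1 - G' / 2)
    (h5 : G ^ 2 * k ^ 2 ≤ 5 * (1 - G' / 2)) (hM : 0 ≤ M) (hψ : energy k G G' u v ≤ M ^ 2) :
    k * ‖u‖ ≤ 2 * M ∧ ‖v‖ ≤ 4 * M := by
  have hψ₀ : 0 ≤ energy k G G' u v := energy_nonneg (by linarith)
  constructor
  · refine le_of_abs_le (abs_le_of_sq_le_sq ?_ (by positivity))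
    linarith [sq_mul_norm_le_energy (k := k) (G := G) (u := u) (v := v) hH]
  · refine abs_le_of_sq_le_sq' ?_ (by positivity) |>.2
    linarith [sq_norm_le_energy (u := u) (v := v) hG h5]

theorem rpow_mul_le_of_le {k x c a b r : ℝ} (hk : 0 ≤ k) (hr : 0 ≤ r) (h : x ≤ c * (k * a + b)) :
    k ^ r * x ≤ c * (k ^ (r + 1) * a + k ^ r * b) := by
  rw [Real.rpow_add_one' hk (by linarith)]
  calc k ^ r * x ≤ k ^ r * (c * (k * a + b)) := mul_le_mul_of_nonneg_left h (by positivity)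
    _ = _ := by ring

theorem energy_decay {g g' g'' : ℝ → ℝ} {u u' u'' : ℝ → E} {k s t : ℝ} {S : Set ℝ} (hst : s ≤ t)
    (hS : Icc s t ⊆ S)
    (hg : ∀ τ ∈ S, HasDerivWithinAt g (g' τ) S τ) (hg' : ∀ τ ∈ S, HasDerivWithinAt g' (g'' τ) S τ)
    (hu : ∀ τ ∈ S, HasDerivWithinAt u (u' τ) S τ) (hu' : ∀ τ ∈ S, HasDerivWithinAt u' (u'' τ) S τ)
    (hg_nonneg : ∀ τ ∈ Icc s t, 0 ≤ g τ) (hg''_nonneg : ∀ τ ∈ Icc s t, 0 ≤ g'' τ)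
    (hode : ∀ τ ∈ Icc s t, u'' τ + k ^ 2 • u τ + (g τ * k ^ 2) • u' τ = 0)
    (hzone : ∀ τ ∈ Icc s t,
      3 * (1 - g' τ / 2) ≤ g τ ^ 2 * k ^ 2 ∧ g τ ^ 2 * k ^ 2 ≤ 5 * (1 - g' τ / 2)) :
    energy k (g t) (g' t) (u t) (u' t) ≤
      energy k (g s) (g' s) (u s) (u' s) * Real.exp (-(k ^ 2 / 3) * ∫ τ in s..t, g τ) := by
  have hderiv : ∀ τ ∈ S, HasDerivWithinAt (fun x => energy k (g x) (g' x) (u x) (u' x)) _ S τ :=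
    fun τ hτ => .energy k (hu τ hτ) (hu' τ hτ) (hg τ hτ) (hg' τ hτ)
  rw [neg_mul, ← intervalIntegral.integral_const_mul]
  refine le_mul_exp_neg_integral_of_hasDerivAt hst
    (fun τ hτ => ((hderiv τ (hS hτ)).continuousWithinAt).mono hS)
    (continuousOn_const.mul fun τ hτ => ((hg τ (hS hτ)).continuousWithinAt).mono hS)
    (fun τ hτ => (hderiv τ (hS (Ioo_subset_Icc_self hτ))).hasDerivAt
      (Filter.mem_of_superset (Icc_mem_nhds hτ.1 hτ.2) hS))
    (fun τ hτ => ?_)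
  have hτ := Ioo_subset_Icc_self hτ
  exact energy_deriv_le (hg_nonneg τ hτ) (hg''_nonneg τ hτ) (hzone τ hτ).1 (hzone τ hτ).2
    (hode τ hτ)

theorem stmt_14_general
    (n : ℕ)
    (g g' g'' : ℝ → ℝ)
    (hg_deriv : ∀ t ∈ Ici (0:ℝ), HasDerivWithinAt g (g' t) (Ici 0) t)
    (hg_deriv' : ∀ t ∈ Ici (0:ℝ), HasDerivWithinAt g' (g'' t) (Ici 0) t)
    (hD1 : ∀ t ∈ Ici (0:ℝ), 0 < g t ∧ g' t ≤ 0 ∧ 0 ≤ g'' t)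
    :
    ∃ C > (0:ℝ),
      ∀ (ξ : EuclideanSpace ℝ (Fin n)),
      ∀ (u u' u'' : ℝ → ℂ),
      (∀ t ∈ Ici (0:ℝ), HasDerivWithinAt u (u' t) (Ici 0) t) →
      (∀ t ∈ Ici (0:ℝ), HasDerivWithinAt u' (u'' t) (Ici 0) t) →
      ContinuousOn u'' (Ici 0) →
      (∀ t ∈ Ici (0:ℝ),
        u'' t + (‖ξ‖ : ℂ) ^ 2 * u t + (g t : ℂ) * (‖ξ‖ : ℂ) ^ 2 * u' t = 0) →
      ∀ s t : ℝ, 0 ≤ s → s ≤ t →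
        (∀ τ ∈ Icc s t, 3 * (1 - g' τ / 2) ≤ g τ ^ 2 * ‖ξ‖ ^ 2 ∧ g τ ^ 2 * ‖ξ‖ ^ 2 ≤ 5 * (1 - g' τ / 2)) →
        (∀ r : ℝ, 1 ≤ r →
          ‖ξ‖ ^ r * ‖u t‖ ≤
            C * Real.exp ((-(‖ξ‖ ^ 2 / 6)) * ∫ τ in s..t, g τ) *
              (‖ξ‖ ^ r * ‖u s‖ + ‖ξ‖ ^ (r - 1) * ‖u' s‖)) ∧
        (∀ r : ℝ, 0 ≤ r →
          ‖ξ‖ ^ r * ‖u' t‖ ≤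
            C * Real.exp ((-(‖ξ‖ ^ 2 / 6)) * ∫ τ in s..t, g τ) *
              (‖ξ‖ ^ (r + 1) * ‖u s‖ + ‖ξ‖ ^ r * ‖u' s‖)) := by
  have hg'_mono : MonotoneOn g' (Ici 0) :=
    monotoneOn_of_hasDerivWithinAt_nonneg (convex_Ici 0)
      (fun x hx => (hg_deriv' x hx).continuousWithinAt)
      (fun x hx => (hg_deriv' x (interior_subset hx)).mono interior_subset)
      (fun x hx => (hD1 x (interior_subset hx)).2.2)
  have one_le_h₀ : 1 ≤ 1 - g' 0 / 2 := by linarith [(hD1 0 self_mem_Ici).2.1]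
  refine ⟨4 * √(3 * (1 - g' 0 / 2)), by positivity, ?_⟩
  intro ξ u u' u'' hu hu' _ hode s t hs hst hzone
  have hsub : Icc s t ⊆ Ici 0 := fun τ hτ => hs.trans hτ.1
  have hode' : ∀ τ ∈ Icc s t, u'' τ + ‖ξ‖ ^ 2 • u τ + (g τ * ‖ξ‖ ^ 2) • u' τ = 0 := fun τ hτ => by
    simpa only [Complex.real_smul, Complex.ofReal_mul, Complex.ofReal_pow] using hode τ (hsub hτ)
  set E := Real.exp ((-(‖ξ‖ ^ 2 / 6)) * ∫ τ in s..t, g τ)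
  set M := √(3 * (1 - g' 0 / 2)) * (‖ξ‖ * ‖u s‖ + ‖u' s‖) * E
  have hψ : energy ‖ξ‖ (g t) (g' t) (u t) (u' t) ≤ M ^ 2 := by
    calc _ ≤ energy ‖ξ‖ (g s) (g' s) (u s) (u' s) * Real.exp (-(‖ξ‖ ^ 2 / 3) * ∫ τ in s..t, g τ) :=
          energy_decay hst hsub hg_deriv hg_deriv' hu hu' (fun τ hτ => (hD1 τ (hsub hτ)).1.le)
            (fun τ hτ => (hD1 τ (hsub hτ)).2.2) hode' hzone
      _ ≤ 3 * (1 - g' 0 / 2) * (‖ξ‖ * ‖u s‖ + ‖u' s‖) ^ 2 * E ^ 2 := by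
          rw [show Real.exp _ = E ^ 2 by rw [← Real.exp_nat_mul]; ring_nf]
          gcongr
          exact energy_le (norm_nonneg ξ) (hD1 s hs).1.le (hzone s (left_mem_Icc.2 hst)).2
            (by linarith [hg'_mono self_mem_Ici hs hs]) one_le_h₀
      _ = M ^ 2 := by rw [mul_pow, mul_pow, Real.sq_sqrt (by positivity)]
  have ht := hD1 t (hsub (right_mem_Icc.2 hst))
  obtain ⟨hu_t, hu'_t⟩ := norm_le_of_energy_le ht.1.le (by linarith [ht.2.1])
    (hzone t (right_mem_Icc.2 hst)).2 (by positivity) hψ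
  have hM : 4 * M = 4 * √(3 * (1 - g' 0 / 2)) * E * (‖ξ‖ * ‖u s‖ + ‖u' s‖) := by ring
  refine ⟨fun r hr => ?_, fun r hr => rpow_mul_le_of_le (norm_nonneg ξ) hr (hu'_t.trans_eq hM)⟩
  have := rpow_mul_le_of_le (norm_nonneg ξ) (sub_nonneg.2 hr)
    ((hu_t.trans (by linarith [show 0 ≤ M by positivity])).trans_eq hM)
  rwa [← mul_assoc, ← Real.rpow_add_one' (norm_nonneg ξ) (by linarith), sub_add_cancel] at this

theorem stmt_14
    (n : ℕ)
    (g g' g'' : ℝ → ℝ)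
    (hg_deriv : ∀ t ∈ Ici (0:ℝ), HasDerivWithinAt g (g' t) (Ici 0) t)
    (hg_deriv' : ∀ t ∈ Ici (0:ℝ), HasDerivWithinAt g' (g'' t) (Ici 0) t)
    (hg_cont : ContinuousOn g'' (Ici 0))
    (hD1 : ∀ t ∈ Ici (0:ℝ), 0 < g t ∧ g' t ≤ 0 ∧ 0 ≤ g'' t)
    (hD2 : ¬ IntegrableOn g (Ici 0))
    (hD3 : ∃ C₁ > (0:ℝ), ∃ C₂ > (0:ℝ), ∀ t ∈ Ici (0:ℝ),
      |g' t| ≤ C₁ * g t * (1 / (1 + t)) ∧ |g'' t| ≤ C₂ * g t * (1 / (1 + t)) ^ 2)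
    :
    ∃ C > (0:ℝ),
      ∀ (ξ : EuclideanSpace ℝ (Fin n)),
      ∀ (u u' u'' : ℝ → ℂ),
      (∀ t ∈ Ici (0:ℝ), HasDerivWithinAt u (u' t) (Ici 0) t) →
      (∀ t ∈ Ici (0:ℝ), HasDerivWithinAt u' (u'' t) (Ici 0) t) →
      ContinuousOn u'' (Ici 0) →
      (∀ t ∈ Ici (0:ℝ),
        u'' t + (‖ξ‖ : ℂ) ^ 2 * u t + (g t : ℂ) * (‖ξ‖ : ℂ) ^ 2 * u' t = 0) →
      ∀ s t : ℝ, 0 ≤ s → s ≤ t →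
        (∀ τ ∈ Icc s t, 3 * (1 - g' τ / 2) ≤ g τ ^ 2 * ‖ξ‖ ^ 2 ∧ g τ ^ 2 * ‖ξ‖ ^ 2 ≤ 5 * (1 - g' τ / 2)) →
        (∀ r : ℝ, 1 ≤ r →
          ‖ξ‖ ^ r * ‖u t‖ ≤
            C * Real.exp ((-(‖ξ‖ ^ 2 / 6)) * ∫ τ in s..t, g τ) *
              (‖ξ‖ ^ r * ‖u s‖ + ‖ξ‖ ^ (r - 1) * ‖u' s‖)) ∧
        (∀ r : ℝ, 0 ≤ r →
          ‖ξ‖ ^ r * ‖u' t‖ ≤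
            C * Real.exp ((-(‖ξ‖ ^ 2 / 6)) * ∫ τ in s..t, g τ) *
              (‖ξ‖ ^ (r + 1) * ‖u s‖ + ‖ξ‖ ^ r * ‖u' s‖)) :=
  stmt_14_general n g g' g'' hg_deriv hg_deriv' hD1
end

section
/- Assume g ∈ C²([0,∞)) satisfies (D1) g(t)>0, g'(t)≤0 and g''(t)≥0, (D2) g ∉ L¹(0,∞), and (D3) |d_t^k g(t)| ≤ C_k g(t)(1/(1+t))^k for k=1,2. Set h(t) = 1 − g'(t)/2. Consider the 2×2 complex matrix A(t,ξ) with entries A₁₁ = 0, A₁₂ = |ξ|, A₂₁ = |ξ|, A₂₂ = i g(t)|ξ|², and let E(·,s,ξ) be the fundamental solution, i.e. ∂_t E(t,s,ξ) = i A(t,ξ) E(t,s,ξ), E(s,s,ξ) = I. Then there exist positive constants C and C' such that for all ξ and all s ≤ t with g(τ)²|ξ|² ≥ 5h(τ) for all τ ∈ [s,t]: |E^{(11)}(t,s,ξ)| ≤ C' e^{−C∫_s^t dτ/g(τ)}, |E^{(12)}(t,s,ξ)| ≤ C' e^{−C∫_s^t dτ/g(τ)}/(g(s)|ξ|), |E^{(21)}(t,s,ξ)|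 ≤ C' e^{−C∫_s^t dτ/g(τ)} g(t)|ξ|, and |E^{(22)}(t,s,ξ)| ≤ C' e^{−C∫_s^t dτ/g(τ)} g(t)/g(s). -/
/-!
Write `a = ‖ξ‖` and `(w₁, w₂)` for a column of `E`. In the elliptic zone the system becomes
dissipative after the change of unknown `p = w₂ / (g a) - i w₁ / (g a)²` (an approximate
diagonalisation of `A(t, ξ)`):
`w₁' = -w₁ / g + i g a² p`, `p' = -(g a² + (g' - 1) / g) p + i (1 + g') / (g³ a²) w₁`.
The zone condition `g² a² ≥ 5 (1 - g'/2)` makes the off-diagonal coefficients small against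
the diagonal ones in the weighted `ℓ¹` norm `‖w₁‖ + 2 ‖p‖`, whose derivative is therefore at
most `-1/(5g)` times itself; Gronwall gives the decay `exp (-(1/5) ∫ 1/g)`. Since
`‖p - w₂ / (g a)‖ ≤ ‖w₁‖ / 5`, the same bound holds for `‖w₁‖ + ‖w₂‖ / (g a)`, which yields
all four estimates. The norm is not differentiable at `0`, so the differential inequality is
proved for `√(‖·‖² + ε²)` and then `ε → 0`.
-/

open Set MeasureTheory Filter Topology Real
open scoped RealInnerProductSpace

theorem HasDerivAt.sqrt_norm_sq_add_sq_le {E : Type*} [NormedAddCommGroup E]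
    [InnerProductSpace ℝ E] {f : ℝ → E} {r : E} {c ε τ : ℝ}
    (hf : HasDerivAt f (-c • f τ + r) τ) (hc : 0 ≤ c) (hε : 0 < ε) :
    ∃ d, HasDerivAt (fun x => √(‖f x‖ ^ 2 + ε ^ 2)) d τ ∧
      d ≤ -c * √(‖f τ‖ ^ 2 + ε ^ 2) + c * ε + ‖r‖ := by
  have hpos : 0 < ‖f τ‖ ^ 2 + ε ^ 2 := by positivity
  refine ⟨_, (hf.norm_sq.add_const _).sqrt hpos.ne', ?_⟩
  set U := √(‖f τ‖ ^ 2 + ε ^ 2)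
  have hU : 0 < U := Real.sqrt_pos.2 hpos
  have hU2 : U ^ 2 = ‖f τ‖ ^ 2 + ε ^ 2 := Real.sq_sqrt hpos.le
  have hfU : ‖f τ‖ ≤ U := Real.le_sqrt_of_sq_le (by nlinarith)
  have hεU : ε ≤ U := Real.le_sqrt_of_sq_le (by nlinarith [sq_nonneg ‖f τ‖])
  have hinner : ⟪f τ, -c • f τ + r⟫ ≤ -c * ‖f τ‖ ^ 2 + ‖f τ‖ * ‖r‖ := by
    rw [inner_add_right, real_inner_smul_right, real_inner_self_eq_norm_sq]
    linarith [real_inner_le_norm (f τ) r]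
  rw [div_le_iff₀ (by positivity)]
  nlinarith [mul_le_mul_of_nonneg_right hfU (norm_nonneg r),
    mul_le_mul_of_nonneg_left hεU (mul_nonneg hc hε.le)]

theorem le_mul_exp_neg_integral_add_of_hasDerivAt_le {L κ : ℝ → ℝ} {s t e : ℝ}
    (hst : s ≤ t) (hL : ContinuousOn L (Icc s t)) (hκ : ContinuousOn κ (Icc s t))
    (hκ₀ : ∀ τ ∈ Icc s t, 0 ≤ κ τ) (he : 0 ≤ e)
    (hL' : ∀ τ ∈ Ioo s t, ∃ d, HasDerivAt L d τ ∧ d ≤ -κ τ * L τ + e) :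
    L t ≤ L s * exp (-∫ τ in s..t, κ τ) + e * (t - s) := by
  set Φ : ℝ → ℝ := fun r => ∫ τ in s..r, κ τ
  have hκi : ∀ r ∈ Icc s t, IntervalIntegrable κ volume s r := fun r hr =>
    (hκ.mono (by rw [uIcc_of_le hr.1]; exact Icc_subset_Icc_right hr.2)).intervalIntegrable
  have hΦ : ContinuousOn Φ (Icc s t) := by
    simpa only [uIcc_of_le hst] using
      intervalIntegral.continuousOn_primitive_interval' (hκi t ⟨hst, le_rfl⟩) left_mem_uIcc
  have hΦ' : ∀ τ ∈ Ioo s t, HasDerivAt Φ (κ τ) τ := fun τ hτ =>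
    intervalIntegral.integral_hasDerivAt_right (hκi τ (Ioo_subset_Icc_self hτ))
      ((hκ.mono Ioo_subset_Icc_self).stronglyMeasurableAtFilter isOpen_Ioo τ hτ)
      (hκ.continuousAt (Icc_mem_nhds hτ.1 hτ.2))
  have hΦmono : MonotoneOn Φ (Icc s t) :=
    monotoneOn_of_hasDerivWithinAt_nonneg (convex_Icc s t) hΦ
      (by simpa only [interior_Icc] using fun τ hτ => (hΦ' τ hτ).hasDerivWithinAt)
      (by simpa only [interior_Icc] using fun τ hτ => hκ₀ τ (Ioo_subset_Icc_self hτ))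
  -- `(L e^Φ)' = (L' + κ L) e^Φ ≤ e e^Φ ≤ e e^{Φ t}`, so `G` is antitone
  set G : ℝ → ℝ := fun r => L r * exp (Φ r) - e * exp (Φ t) * (r - s)
  have hG' : ∀ τ ∈ Ioo s t, ∃ d, HasDerivAt G d τ ∧ d ≤ 0 := by
    intro τ hτ
    obtain ⟨d, hd, hdle⟩ := hL' τ hτ
    refine ⟨_, (hd.mul (hΦ' τ hτ).exp).sub
      (((hasDerivAt_id τ).sub_const s).const_mul (e * exp (Φ t))), ?_⟩
    have hΦτ : exp (Φ τ) ≤ exp (Φ t) :=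
      exp_le_exp.2 (hΦmono (Ioo_subset_Icc_self hτ) ⟨hst, le_rfl⟩ hτ.2.le)
    nlinarith [exp_pos (Φ τ)]
  have hG : AntitoneOn G (Icc s t) := by
    refine antitoneOn_of_deriv_nonpos (convex_Icc s t)
      ((hL.mul (continuous_exp.comp_continuousOn hΦ)).sub (by fun_prop)) ?_ ?_ <;>
      rw [interior_Icc]
    · exact fun τ hτ => (hG' τ hτ).choose_spec.1.differentiableAt.differentiableWithinAt
    · intro τ hτ
      obtain ⟨d, hd, hdle⟩ := hG' τ hτ
      rwa [hd.deriv]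
  have hGts := hG ⟨le_rfl, hst⟩ ⟨hst, le_rfl⟩ hst
  simp only [G, Φ, intervalIntegral.integral_same, exp_zero, sub_self, mul_zero, sub_zero,
    mul_one] at hGts
  have : L t - e * (t - s) ≤ L s / exp (∫ τ in s..t, κ τ) :=
    (le_div_iff₀ (exp_pos _)).2 (by linarith)
  rw [exp_neg, ← div_eq_mul_inv]
  linarith

theorem elliptic_coeff_bounds {G G' a : ℝ} (hG : 0 < G) (hG' : G' ≤ 0)
    (hzone : 5 * (1 - G' / 2) ≤ G ^ 2 * a ^ 2) :
    0 ≤ G * a ^ 2 + (G' - 1) / G ∧ G * a ^ 2 + (G' - 1) / G ≤ G * a ^ 2 ∧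
      G * a ^ 2 - 2 * (G * a ^ 2 + (G' - 1) / G) ≤ -G⁻¹ ∧
      |(1 + G') / (G ^ 3 * a ^ 2)| ≤ 2 / 5 * G⁻¹ := by
  refine ⟨?_, ?_, ?_, ?_⟩
  · rw [show G * a ^ 2 + (G' - 1) / G = (G ^ 2 * a ^ 2 + G' - 1) / G by field_simp; ring]
    exact div_nonneg (by nlinarith) hG.le
  · linarith [div_nonpos_of_nonpos_of_nonneg (by linarith : G' - 1 ≤ 0) hG.le]
  · have : G * a ^ 2 - 2 * (G * a ^ 2 + (G' - 1) / G) + G⁻¹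
        = -(G ^ 2 * a ^ 2 + 2 * G' - 3) / G := by
      field_simp; ring
    linarith [div_nonpos_of_nonpos_of_nonneg
      (by nlinarith : -(G ^ 2 * a ^ 2 + 2 * G' - 3) ≤ 0) hG.le]
  · have hGa : 0 < G ^ 3 * a ^ 2 := by
      rw [show G ^ 3 * a ^ 2 = G * (G ^ 2 * a ^ 2) by ring]
      exact mul_pos hG (by nlinarith)
    rw [abs_div, abs_of_pos hGa, div_le_iff₀ hGa,
      show 2 / 5 * G⁻¹ * (G ^ 3 * a ^ 2) = 2 / 5 * (G ^ 2 * a ^ 2) by field_simp]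
    exact abs_le.2 ⟨by nlinarith, by nlinarith⟩

open Complex (I)

noncomputable def ellipticCoord (g : ℝ → ℝ) (a : ℝ) (w₁ w₂ : ℝ → ℂ) (r : ℝ) : ℂ :=
  w₂ r / ((g r * a : ℝ) : ℂ) - I * w₁ r / ((g r * a : ℝ) : ℂ) ^ 2

section
variable {g g' : ℝ → ℝ} {a τ : ℝ} {w₁ w₂ : ℝ → ℂ}

theorem hasDerivAt_fst_in_ellipticCoord (hgτ : g τ ≠ 0) (ha : a ≠ 0)
    (hw₁ : HasDerivAt w₁ (I * a * w₂ τ) τ) :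
    HasDerivAt w₁
      (-(g τ)⁻¹ • w₁ τ + I * (g τ * a ^ 2 : ℝ) * ellipticCoord g a w₁ w₂ τ) τ := by
  refine hw₁.congr_deriv ?_
  have hg₀ : ((g τ : ℝ) : ℂ) ≠ 0 := Complex.ofReal_ne_zero.2 hgτ
  have ha₀ : ((a : ℝ) : ℂ) ≠ 0 := Complex.ofReal_ne_zero.2 ha
  simp only [ellipticCoord, Complex.real_smul]
  push_cast
  field_simp
  linear_combination w₁ τ * Complex.I_mul_I

theorem hasDerivAt_ellipticCoord (hg : HasDerivAt g (g' τ) τ) (hgτ : g τ ≠ 0) (ha : a ≠ 0)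
    (hw₁ : HasDerivAt w₁ (I * a * w₂ τ) τ)
    (hw₂ : HasDerivAt w₂ (I * a * w₁ τ - (g τ * a ^ 2 : ℝ) * w₂ τ) τ) :
    HasDerivAt (ellipticCoord g a w₁ w₂)
      (-(g τ * a ^ 2 + (g' τ - 1) / g τ) • ellipticCoord g a w₁ w₂ τ
        + I * ((1 + g' τ) / (g τ ^ 3 * a ^ 2) : ℝ) * w₁ τ) τ := by
  have hm : HasDerivAt (fun r => ((g r * a : ℝ) : ℂ)) ((g' τ * a : ℝ) : ℂ) τ :=
    (hg.mul_const a).ofReal_comp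
  have hm0 : ((g τ * a : ℝ) : ℂ) ≠ 0 := Complex.ofReal_ne_zero.2 (mul_ne_zero hgτ ha)
  refine ((hw₂.div hm hm0).sub
    ((hw₁.const_mul I).div (hm.pow 2) (pow_ne_zero 2 hm0))).congr_deriv ?_
  have hg₀ : ((g τ : ℝ) : ℂ) ≠ 0 := Complex.ofReal_ne_zero.2 hgτ
  have ha₀ : ((a : ℝ) : ℂ) ≠ 0 := Complex.ofReal_ne_zero.2 ha
  simp only [ellipticCoord, Complex.real_smul, Pi.pow_apply]
  push_cast
  field_simp
  linear_combination -((a : ℂ) * g τ * w₂ τ) * Complex.I_mul_I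

noncomputable def ellipticLyapunov (g : ℝ → ℝ) (a ε : ℝ) (w₁ w₂ : ℝ → ℂ) (r : ℝ) : ℝ :=
  √(‖w₁ r‖ ^ 2 + ε ^ 2) + 2 * √(‖ellipticCoord g a w₁ w₂ r‖ ^ 2 + ε ^ 2)

theorem exists_hasDerivAt_ellipticLyapunov_le {ε : ℝ} (hg : HasDerivAt g (g' τ) τ)
    (hgτ : 0 < g τ) (hg'τ : g' τ ≤ 0) (ha : 0 < a)
    (hzone : 5 * (1 - g' τ / 2) ≤ g τ ^ 2 * a ^ 2) (hw₁ : HasDerivAt w₁ (I * a * w₂ τ) τ)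
    (hw₂ : HasDerivAt w₂ (I * a * w₁ τ - (g τ * a ^ 2 : ℝ) * w₂ τ) τ) (hε : 0 < ε) :
    ∃ d, HasDerivAt (ellipticLyapunov g a ε w₁ w₂) d τ ∧
      d ≤ -(1 / 5 * (1 / g τ)) * ellipticLyapunov g a ε w₁ w₂ τ
        + ε * (1 / g τ + 2 * (g τ * a ^ 2)) := by
  obtain ⟨hD₀, hD, hcol, hσ⟩ := elliptic_coeff_bounds hgτ hg'τ hzone
  have hγ : 0 < (g τ)⁻¹ := inv_pos.2 hgτ
  obtain ⟨d₁, hd₁, hd₁le⟩ :=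
    (hasDerivAt_fst_in_ellipticCoord hgτ.ne' ha.ne' hw₁).sqrt_norm_sq_add_sq_le hγ.le hε
  obtain ⟨d₂, hd₂, hd₂le⟩ :=
    (hasDerivAt_ellipticCoord hg hgτ.ne' ha.ne' hw₁ hw₂).sqrt_norm_sq_add_sq_le hD₀ hε
  refine ⟨d₁ + 2 * d₂, hd₁.add (hd₂.const_mul 2), ?_⟩
  rw [norm_mul, norm_mul, Complex.norm_I, one_mul, Complex.norm_real, Real.norm_eq_abs,
    abs_of_pos (by positivity : 0 < g τ * a ^ 2)] at hd₁le
  rw [norm_mul, norm_mul, Complex.norm_I, one_mul, Complex.norm_real,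
    Real.norm_eq_abs] at hd₂le
  set p := ellipticCoord g a w₁ w₂
  set U := √(‖w₁ τ‖ ^ 2 + ε ^ 2)
  set V := √(‖p τ‖ ^ 2 + ε ^ 2)
  have hU : ‖w₁ τ‖ ≤ U := le_sqrt_of_sq_le (by nlinarith)
  have hV : ‖p τ‖ ≤ V := le_sqrt_of_sq_le (by nlinarith)
  have hV₀ : 0 ≤ V := sqrt_nonneg _
  show d₁ + 2 * d₂ ≤
    -(1 / 5 * (1 / g τ)) * (U + 2 * V) + ε * (1 / g τ + 2 * (g τ * a ^ 2))
  simp only [one_div]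
  nlinarith [mul_le_mul_of_nonneg_left hV (by positivity : 0 ≤ g τ * a ^ 2),
    mul_le_mul hσ hU (norm_nonneg _) (by positivity), mul_le_mul_of_nonneg_right hcol hV₀,
    mul_le_mul_of_nonneg_left hD hε.le, mul_nonneg hγ.le hV₀]

variable {s t : ℝ}

theorem norm_add_two_mul_norm_ellipticCoord_le (hst : s ≤ t) (ha : 0 < a)
    (hg : ContinuousOn g (Icc s t)) (hg' : ∀ τ ∈ Ioo s t, HasDerivAt g (g' τ) τ)
    (hgpos : ∀ τ ∈ Icc s t, 0 < g τ) (hg'nonpos : ∀ τ ∈ Icc s t, g' τ ≤ 0)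
    (hzone : ∀ τ ∈ Icc s t, 5 * (1 - g' τ / 2) ≤ g τ ^ 2 * a ^ 2)
    (hw : ∀ τ ∈ Icc s t, HasDerivAt w₁ (I * a * w₂ τ) τ ∧
      HasDerivAt w₂ (I * a * w₁ τ - (g τ * a ^ 2 : ℝ) * w₂ τ) τ) :
    ‖w₁ t‖ + 2 * ‖ellipticCoord g a w₁ w₂ t‖ ≤
      (‖w₁ s‖ + 2 * ‖ellipticCoord g a w₁ w₂ s‖) * exp (-(1 / 5 * ∫ τ in s..t, 1 / g τ)) := by
  have hg₀ : ∀ τ ∈ Icc s t, g τ ≠ 0 := fun τ hτ => (hgpos τ hτ).ne'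
  have hw₁ : ContinuousOn w₁ (Icc s t) := fun τ hτ =>
    (hw τ hτ).1.continuousAt.continuousWithinAt
  have hw₂ : ContinuousOn w₂ (Icc s t) := fun τ hτ =>
    (hw τ hτ).2.continuousAt.continuousWithinAt
  have hp : ContinuousOn (ellipticCoord g a w₁ w₂) (Icc s t) := by
    have hm : ContinuousOn (fun r => ((g r * a : ℝ) : ℂ)) (Icc s t) :=
      Complex.continuous_ofReal.comp_continuousOn (hg.mul continuousOn_const)
    have hm₀ : ∀ τ ∈ Icc s t, ((g τ * a : ℝ) : ℂ) ≠ 0 := fun τ hτ =>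
      Complex.ofReal_ne_zero.2 (mul_ne_zero (hg₀ τ hτ) ha.ne')
    exact (hw₂.div hm hm₀).sub
      ((continuousOn_const.mul hw₁).div (hm.pow 2) fun τ hτ => pow_ne_zero 2 (hm₀ τ hτ))
  obtain ⟨K, hK⟩ := isCompact_Icc.bddAbove_image (f := fun τ => 1 / g τ + 2 * (g τ * a ^ 2))
    ((continuousOn_const.div hg hg₀).add (continuousOn_const.mul (hg.mul continuousOn_const)))
  have hK' : ∀ τ ∈ Icc s t, 1 / g τ + 2 * (g τ * a ^ 2) ≤ K := fun τ hτ =>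
    hK (mem_image_of_mem _ hτ)
  have hK₀ : 0 ≤ K :=
    le_trans (by have := hgpos s ⟨le_rfl, hst⟩; positivity) (hK' s ⟨le_rfl, hst⟩)
  have hreg : ∀ ε > 0, ellipticLyapunov g a ε w₁ w₂ t ≤ ellipticLyapunov g a ε w₁ w₂ s
      * exp (-(1 / 5 * ∫ τ in s..t, 1 / g τ)) + ε * K * (t - s) := by
    intro ε hε
    rw [← intervalIntegral.integral_const_mul]
    refine le_mul_exp_neg_integral_add_of_hasDerivAt_le hst ?_ ?_ ?_ (by positivity)
      fun τ hτ => ?_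
    · unfold ellipticLyapunov
      fun_prop
    · exact continuousOn_const.mul (continuousOn_const.div hg hg₀)
    · intro τ hτ
      have := hgpos τ hτ
      positivity
    have hτ' := Ioo_subset_Icc_self hτ
    obtain ⟨d, hd, hdle⟩ := exists_hasDerivAt_ellipticLyapunov_le (hg' τ hτ) (hgpos τ hτ')
      (hg'nonpos τ hτ') ha (hzone τ hτ') (hw τ hτ').1 (hw τ hτ').2 hε
    exact ⟨d, hd, hdle.trans (by gcongr; exact hK' τ hτ')⟩
  have hlim : ∀ r, Tendsto (fun ε => ellipticLyapunov g a ε w₁ w₂ r) (𝓝[>] 0)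
      (𝓝 (‖w₁ r‖ + 2 * ‖ellipticCoord g a w₁ w₂ r‖)) := by
    intro r
    have : Continuous fun ε => ellipticLyapunov g a ε w₁ w₂ r := by
      unfold ellipticLyapunov; fun_prop
    simpa [ellipticLyapunov] using (this.tendsto 0).mono_left nhdsWithin_le_nhds
  have herr : Tendsto (fun ε : ℝ => ε * K * (t - s)) (𝓝[>] 0) (𝓝 0) := by
    have : Continuous fun ε : ℝ => ε * K * (t - s) := by fun_prop
    simpa using tendsto_nhdsWithin_of_tendsto_nhds (this.tendsto 0)
  refine le_of_tendsto_of_tendsto (hlim t) ?_ (eventually_nhdsWithin_of_forall hreg)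
  simpa using ((hlim s).mul_const _).add herr

theorem norm_ellipticCoord_sub_le {r : ℝ} (h5 : 5 ≤ (g r * a) ^ 2) :
    ‖ellipticCoord g a w₁ w₂ r - w₂ r / ((g r * a : ℝ) : ℂ)‖ ≤ ‖w₁ r‖ / 5 := by
  rw [ellipticCoord, sub_sub_cancel_left, norm_neg, norm_div, norm_mul, Complex.norm_I,
    one_mul, norm_pow, Complex.norm_real, Real.norm_eq_abs, sq_abs]
  exact div_le_div_of_nonneg_left (norm_nonneg _) (by norm_num) h5

theorem norm_add_norm_div_le_of_elliptic (hst : s ≤ t) (ha : 0 < a)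
    (hg : ContinuousOn g (Icc s t)) (hg' : ∀ τ ∈ Ioo s t, HasDerivAt g (g' τ) τ)
    (hgpos : ∀ τ ∈ Icc s t, 0 < g τ) (hg'nonpos : ∀ τ ∈ Icc s t, g' τ ≤ 0)
    (hzone : ∀ τ ∈ Icc s t, 5 * (1 - g' τ / 2) ≤ g τ ^ 2 * a ^ 2)
    (hw : ∀ τ ∈ Icc s t, HasDerivAt w₁ (I * a * w₂ τ) τ ∧
      HasDerivAt w₂ (I * a * w₁ τ - (g τ * a ^ 2 : ℝ) * w₂ τ) τ) :
    ‖w₁ t‖ + ‖w₂ t‖ / (g t * a) ≤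
      3 * (‖w₁ s‖ + ‖w₂ s‖ / (g s * a)) * exp (-(1 / 5 * ∫ τ in s..t, 1 / g τ)) := by
  have hdecay := norm_add_two_mul_norm_ellipticCoord_le hst ha hg hg' hgpos hg'nonpos hzone hw
  have hclose : ∀ r ∈ Icc s t,
      |‖ellipticCoord g a w₁ w₂ r‖ - ‖w₂ r‖ / (g r * a)| ≤ ‖w₁ r‖ / 5 := fun r hr => by
    have h5 : 5 ≤ (g r * a) ^ 2 := by nlinarith [hzone r hr, hg'nonpos r hr]
    have h := (abs_norm_sub_norm_le _ _).trans (norm_ellipticCoord_sub_le (w₁ := w₁) (w₂ := w₂) h5)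
    rwa [norm_div, Complex.norm_real, Real.norm_eq_abs,
      abs_of_pos (mul_pos (hgpos r hr) ha)] at h
  obtain ⟨-, hs₂⟩ := abs_le.1 (hclose s ⟨le_rfl, hst⟩)
  obtain ⟨ht₁, -⟩ := abs_le.1 (hclose t ⟨hst, le_rfl⟩)
  have hE := (exp_pos (-(1 / 5 * ∫ τ in s..t, 1 / g τ))).le
  have hYs : 0 ≤ ‖w₂ s‖ / (g s * a) :=
    div_nonneg (norm_nonneg _) (mul_pos (hgpos s ⟨le_rfl, hst⟩) ha).le
  have hXs := norm_nonneg (w₁ s)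
  calc ‖w₁ t‖ + ‖w₂ t‖ / (g t * a)
        ≤ 6 / 5 * (‖w₁ t‖ + 2 * ‖ellipticCoord g a w₁ w₂ t‖) := by
          linarith [norm_nonneg (w₁ t), norm_nonneg (ellipticCoord g a w₁ w₂ t)]
    _ ≤ 6 / 5 * ((‖w₁ s‖ + 2 * ‖ellipticCoord g a w₁ w₂ s‖)
          * exp (-(1 / 5 * ∫ τ in s..t, 1 / g τ))) := by gcongr
    _ ≤ 6 / 5 * (5 / 2 * (‖w₁ s‖ + ‖w₂ s‖ / (g s * a))
          * exp (-(1 / 5 * ∫ τ in s..t, 1 / g τ))) := by gcongr; linarith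
    _ = _ := by ring

end

theorem stmt_16_general
    (n : ℕ)
    (g g' g'' : ℝ → ℝ)
    (hg_deriv : ∀ t ∈ Ici (0:ℝ), HasDerivWithinAt g (g' t) (Ici 0) t)
    (hD1 : ∀ t ∈ Ici (0:ℝ), 0 < g t ∧ g' t ≤ 0 ∧ 0 ≤ g'' t)
    :
    ∃ C > (0:ℝ), ∃ C' > (0:ℝ),
      ∀ (ξ : EuclideanSpace ℝ (Fin n)),
      ∀ s t : ℝ, 0 ≤ s → s ≤ t →
        (∀ τ ∈ Icc s t, 5 * (1 - g' τ / 2) ≤ g τ ^ 2 * ‖ξ‖ ^ 2) →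
      ∀ E11 E12 E21 E22 : ℝ → ℂ,
        E11 s = 1 → E12 s = 0 → E21 s = 0 → E22 s = 1 →
        (∀ τ ∈ Ici s,
          HasDerivAt E11 (Complex.I * ((0 : ℂ) * E11 τ + ((‖ξ‖ : ℝ) : ℂ) * E21 τ)) τ ∧
          HasDerivAt E21 (Complex.I * (((‖ξ‖ : ℝ) : ℂ) * E11 τ + (Complex.I * ((g τ * ‖ξ‖ ^ 2 : ℝ) : ℂ)) * E21 τ)) τ ∧
          HasDerivAt E12 (Complex.I * ((0 : ℂ) * E12 τ + ((‖ξ‖ : ℝ) : ℂ) * E22 τ)) τ ∧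
          HasDerivAt E22 (Complex.I * (((‖ξ‖ : ℝ) : ℂ) * E12 τ + (Complex.I * ((g τ * ‖ξ‖ ^ 2 : ℝ) : ℂ)) * E22 τ)) τ) →
        ‖E11 t‖ ≤ C' * Real.exp (-(C * ∫ τ in s..t, 1 / g τ)) ∧
        ‖E12 t‖ ≤ C' * Real.exp (-(C * ∫ τ in s..t, 1 / g τ)) / (g s * ‖ξ‖) ∧
        ‖E21 t‖ ≤ C' * Real.exp (-(C * ∫ τ in s..t, 1 / g τ)) * (g t * ‖ξ‖) ∧
        ‖E22 t‖ ≤ C' * Real.exp (-(C * ∫ τ in s..t, 1 / g τ)) * (g t / g s) := by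
  refine ⟨1 / 5, by norm_num, 3, by norm_num, ?_⟩
  intro ξ s t hs hst hzone E11 E12 E21 E22 h11 h12 h21 h22 hE
  have hsub : Icc s t ⊆ Ici 0 := fun τ hτ => hs.trans hτ.1
  have hgpos : ∀ τ ∈ Icc s t, 0 < g τ := fun τ hτ => (hD1 τ (hsub hτ)).1
  have hξ : 0 < ‖ξ‖ := (norm_nonneg ξ).lt_of_ne fun h => by
    nlinarith [h ▸ hzone s ⟨le_rfl, hst⟩, (hD1 s hs).2.1]
  have key := fun w₁ w₂ : ℝ → ℂ => norm_add_norm_div_le_of_elliptic (w₁ := w₁) (w₂ := w₂)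
    hst hξ (fun τ hτ => (hg_deriv τ (hsub hτ)).continuousWithinAt.mono hsub)
    (fun τ hτ => (hg_deriv τ (hs.trans hτ.1.le)).hasDerivAt
      (Ici_mem_nhds (hs.trans_lt hτ.1)))
    hgpos (fun τ hτ => (hD1 τ (hsub hτ)).2.1) hzone
  have col₁ := key E11 E21 fun τ hτ =>
    ⟨(hE τ hτ.1).1.congr_deriv (by ring), (hE τ hτ.1).2.1.congr_deriv
      (by linear_combination ((g τ * ‖ξ‖ ^ 2 : ℝ) : ℂ) * E21 τ * Complex.I_mul_I)⟩
  have col₂ := key E12 E22 fun τ hτ =>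
    ⟨(hE τ hτ.1).2.2.1.congr_deriv (by ring), (hE τ hτ.1).2.2.2.congr_deriv
      (by linear_combination ((g τ * ‖ξ‖ ^ 2 : ℝ) : ℂ) * E22 τ * Complex.I_mul_I)⟩
  simp only [h11, h21, h12, h22, norm_one, norm_zero, zero_div, add_zero, zero_add,
    mul_one] at col₁ col₂
  have hgs := hgpos s ⟨le_rfl, hst⟩
  have hm : 0 < g t * ‖ξ‖ := mul_pos (hgpos t ⟨hst, le_rfl⟩) hξ
  have e21 := (div_le_iff₀ hm).1 ((le_add_of_nonneg_left (norm_nonneg (E11 t))).trans col₁)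
  have e22 := (div_le_iff₀ hm).1 ((le_add_of_nonneg_left (norm_nonneg (E12 t))).trans col₂)
  refine ⟨(le_add_of_nonneg_right (by positivity)).trans col₁, ?_, e21, ?_⟩
  · calc ‖E12 t‖ ≤ _ := (le_add_of_nonneg_right (by positivity)).trans col₂
      _ = _ := by ring
  · calc ‖E22 t‖ ≤ _ := e22
      _ = _ := by field_simp

theorem stmt_16
    (n : ℕ)
    (g g' g'' : ℝ → ℝ)
    (hg_deriv : ∀ t ∈ Ici (0:ℝ), HasDerivWithinAt g (g' t) (Ici 0) t)
    (hg_deriv' : ∀ t ∈ Ici (0:ℝ), HasDerivWithinAt g' (g'' t) (Ici 0) t)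
    (hg_cont : ContinuousOn g'' (Ici 0))
    (hD1 : ∀ t ∈ Ici (0:ℝ), 0 < g t ∧ g' t ≤ 0 ∧ 0 ≤ g'' t)
    (hD2 : ¬ IntegrableOn g (Ici 0))
    (hD3 : ∃ C₁ > (0:ℝ), ∃ C₂ > (0:ℝ), ∀ t ∈ Ici (0:ℝ),
      |g' t| ≤ C₁ * g t * (1 / (1 + t)) ∧ |g'' t| ≤ C₂ * g t * (1 / (1 + t)) ^ 2)
    :
    ∃ C > (0:ℝ), ∃ C' > (0:ℝ),
      ∀ (ξ : EuclideanSpace ℝ (Fin n)),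
      ∀ s t : ℝ, 0 ≤ s → s ≤ t →
        (∀ τ ∈ Icc s t, 5 * (1 - g' τ / 2) ≤ g τ ^ 2 * ‖ξ‖ ^ 2) →
      ∀ E11 E12 E21 E22 : ℝ → ℂ,
        E11 s = 1 → E12 s = 0 → E21 s = 0 → E22 s = 1 →
        (∀ τ ∈ Ici s,
          HasDerivAt E11 (Complex.I * ((0 : ℂ) * E11 τ + ((‖ξ‖ : ℝ) : ℂ) * E21 τ)) τ ∧
          HasDerivAt E21 (Complex.I * (((‖ξ‖ : ℝ) : ℂ) * E11 τ + (Complex.I * ((g τ * ‖ξ‖ ^ 2 : ℝ) : ℂ)) * E21 τ)) τ ∧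
          HasDerivAt E12 (Complex.I * ((0 : ℂ) * E12 τ + ((‖ξ‖ : ℝ) : ℂ) * E22 τ)) τ ∧
          HasDerivAt E22 (Complex.I * (((‖ξ‖ : ℝ) : ℂ) * E12 τ + (Complex.I * ((g τ * ‖ξ‖ ^ 2 : ℝ) : ℂ)) * E22 τ)) τ) →
        ‖E11 t‖ ≤ C' * Real.exp (-(C * ∫ τ in s..t, 1 / g τ)) ∧
        ‖E12 t‖ ≤ C' * Real.exp (-(C * ∫ τ in s..t, 1 / g τ)) / (g s * ‖ξ‖) ∧
        ‖E21 t‖ ≤ C' * Real.exp (-(C * ∫ τ in s..t, 1 / g τ)) * (g t * ‖ξ‖) ∧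
        ‖E22 t‖ ≤ C' * Real.exp (-(C * ∫ τ in s..t, 1 / g τ)) * (g t / g s) :=
  stmt_16_general n g g' g'' hg_deriv hD1
end

section
/- Let g : [0,∞) → ℝ be continuous, positive and non-increasing, and set G(t) = 1 + ∫₀ᵗ g(τ)dτ. Then for every constant C > 0 there exist constants C₁ > 0 and K > 0 such that for all 0 ≤ s ≤ t: exp( −C ∫₀^s dτ/g(τ) ) · exp( −C₁ ∫_s^t g(τ)dτ ) ≤ K exp( −C₁ G(t) ). (One may take C₁ = C/g(0)² and K = e^{C₁}.) -/
/-!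
Since `g` is non-increasing, `g τ ≤ g 0` gives `g τ ≤ g(0)² / g τ`, so with `C₁ = C / g(0)²` the
elliptic decay dominates the missing part of the hyperbolic one:
`C₁ ∫₀ˢ g ≤ C ∫₀ˢ 1/g`. Splitting `∫₀ᵗ g = ∫₀ˢ g + ∫ₛᵗ g`, the constant `1` in `G(t)` is absorbed
by `K = exp C₁`.
-/

open Set MeasureTheory

lemma AntitoneOn.monotoneOn_one_div {g : ℝ → ℝ} {s : Set ℝ} (hg : AntitoneOn g s)
    (hpos : ∀ x ∈ s, 0 < g x) : MonotoneOn (fun x => 1 / g x) s :=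
  fun _ hx _ hy hxy => one_div_le_one_div_of_le (hpos _ hy) (hg hx hy hxy)

lemma intervalIntegral.integral_le_sq_mul_integral_one_div {g : ℝ → ℝ} {a b M : ℝ} (hab : a ≤ b)
    (hg : IntervalIntegrable g volume a b) (hg' : IntervalIntegrable (fun x => 1 / g x) volume a b)
    (hpos : ∀ x ∈ Icc a b, 0 < g x) (hM : ∀ x ∈ Icc a b, g x ≤ M) :
    ∫ x in a..b, g x ≤ M ^ 2 * ∫ x in a..b, 1 / g x := by
  rw [← intervalIntegral.integral_const_mul]
  refine intervalIntegral.integral_mono_on hab hg (hg'.const_mul _) fun x hx => ?_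
  have hgx := hpos x hx
  rw [mul_one_div, le_div_iff₀ hgx, ← sq]
  exact pow_le_pow_left₀ hgx.le (hM x hx) 2

lemma exp_mul_exp_le_of_mul_le {C C₁ I A B : ℝ} (h : C₁ * A ≤ C * I) :
    Real.exp (-(C * I)) * Real.exp (-(C₁ * B)) ≤
      Real.exp C₁ * Real.exp (-(C₁ * (1 + (A + B)))) := by
  rw [← Real.exp_add, ← Real.exp_add, Real.exp_le_exp]
  linarith

theorem stmt_17_general
    (g : ℝ → ℝ)
    (hgpos : ∀ t ∈ Ici (0:ℝ), 0 < g t)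
    (hmono : AntitoneOn g (Ici 0)) :
    ∀ C > (0:ℝ), ∃ C₁ > (0:ℝ), ∃ K > (0:ℝ), ∀ s t : ℝ, 0 ≤ s → s ≤ t →
      Real.exp (-(C * ∫ τ in (0:ℝ)..s, 1 / g τ)) *
        Real.exp (-(C₁ * ∫ τ in s..t, g τ)) ≤
      K * Real.exp (-(C₁ * (1 + ∫ τ in (0:ℝ)..t, g τ))) := by
  intro C hC
  have hg0 : 0 < g 0 := hgpos 0 self_mem_Ici
  refine ⟨C / g 0 ^ 2, by positivity, Real.exp (C / g 0 ^ 2), Real.exp_pos _, fun s t hs hst => ?_⟩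
  have hsub : ∀ {a b : ℝ}, 0 ≤ a → a ≤ b → uIcc a b ⊆ Ici 0 := fun ha hab x hx =>
    ha.trans (uIcc_of_le hab ▸ hx).1
  have hg : ∀ {a b : ℝ}, 0 ≤ a → a ≤ b → IntervalIntegrable g volume a b := fun ha hab =>
    (hmono.mono (hsub ha hab)).intervalIntegrable
  have hinv : IntervalIntegrable (fun τ => 1 / g τ) volume 0 s :=
    ((hmono.monotoneOn_one_div hgpos).mono (hsub le_rfl hs)).intervalIntegrable
  have hcompare : ∫ τ in (0:ℝ)..s, g τ ≤ g 0 ^ 2 * ∫ τ in (0:ℝ)..s, 1 / g τ :=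
    intervalIntegral.integral_le_sq_mul_integral_one_div hs (hg le_rfl hs) hinv
      (fun x hx => hgpos x hx.1) (fun x hx => hmono self_mem_Ici hx.1 hx.1)
  rw [← intervalIntegral.integral_add_adjacent_intervals (hg le_rfl hs) (hg hs hst)]
  refine exp_mul_exp_le_of_mul_le ?_
  calc C / g 0 ^ 2 * ∫ τ in (0:ℝ)..s, g τ
      ≤ C / g 0 ^ 2 * (g 0 ^ 2 * ∫ τ in (0:ℝ)..s, 1 / g τ) := by gcongr
    _ = C * ∫ τ in (0:ℝ)..s, 1 / g τ := by field_simp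

theorem stmt_17
    (g : ℝ → ℝ)
    (hgc : ContinuousOn g (Ici 0)) (hgpos : ∀ t ∈ Ici (0:ℝ), 0 < g t)
    (hmono : AntitoneOn g (Ici 0)) :
    ∀ C > (0:ℝ), ∃ C₁ > (0:ℝ), ∃ K > (0:ℝ), ∀ s t : ℝ, 0 ≤ s → s ≤ t →
      Real.exp (-(C * ∫ τ in (0:ℝ)..s, 1 / g τ)) *
        Real.exp (-(C₁ * ∫ τ in s..t, g τ)) ≤
      K * Real.exp (-(C₁ * (1 + ∫ τ in (0:ℝ)..t, g τ))) :=
  stmt_17_general g hgpos hmono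
end
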